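/- arXiv:2605.12142 — 8 statements merged into one kernel-verified Lean document; each statement's English description precedes it below -/
import Mathlib

section
/- Let (Ω, 𝓕, P) be a probability space with a filtration (𝓕_t)_{t≥0}, let K ∈ ℕ, and for each i = 1,…,K let Tᵢ be a stopping time of the filtration, let ξᵢ be a bounded real random variable, let Nᵢ be a bounded random variable measurable with respect to the σ-algebra 𝓕_{Tᵢ} at the stopping time Tᵢ, and let ζᵢ be an 𝓕_{Tᵢ}-measurable version of E[ξᵢ | 𝓕_{Tᵢ}]. Then for all 0 ≤ s ≤ t, E[Σᵢ₌₁ᴷ 1_{{s < Tᵢ ≤ t}} · Nᵢ · ξᵢ | 𝓕_s] = E[Σᵢ₌₁ᴷ 1_{{s < Tᵢ ≤ t}} · Nᵢ · ζᵢ | 𝓕_s] almost surely; consequently the process M_t := E[Σᵢ₌₁ᴷ 1_{{Tᵢ ≤ t}} Nᵢ ξᵢ | 𝓕_t] − Σᵢ₌₁ᴷ 1_{{Tᵢ ≤ t}} Nᵢ ζᵢ has centered increments given the past. -/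
/-!
For `B ∈ 𝓕_s` the set `B ∩ {s < Tᵢ ≤ t}` lies in `𝓕_{Tᵢ}`, so `1_B 1_{s<Tᵢ≤t} Nᵢ` is a bounded
`𝓕_{Tᵢ}`-measurable weight which can be pulled out of `E[ξᵢ | 𝓕_{Tᵢ}]`; hence
`∫_B 1_{s<Tᵢ≤t} Nᵢ ξᵢ = ∫_B 1_{s<Tᵢ≤t} Nᵢ ζᵢ` for all `B ∈ 𝓕_s`, which is the first claim.
Since `1_{Tᵢ≤t} - 1_{Tᵢ≤s} = 1_{s<Tᵢ≤t}`, the tower property turns the second claim into the first.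
-/

open MeasureTheory ProbabilityTheory

namespace MeasureTheory

theorem IsStoppingTime.measurableSet_inter_gt {Ω ι : Type*} {m : MeasurableSpace Ω}
    [LinearOrder ι] {f : Filtration ι m} {τ : Ω → WithTop ι} (hτ : IsStoppingTime f τ) {i : ι}
    {B : Set Ω} (hB : MeasurableSet[f i] B) :
    MeasurableSet[hτ.measurableSpace] (B ∩ {ω | i < τ ω}) := by
  have hBi : MeasurableSet[f i] (B ∩ {ω | i < τ ω}) := hB.inter (hτ.measurableSet_gt i)
  refine ⟨le_iSup f i _ hBi, fun j => ?_⟩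
  rcases le_or_gt i j with hij | hji
  · exact (f.mono hij _ hBi).inter (hτ j)
  · convert @MeasurableSet.empty _ (f j)
    ext ω
    simp only [Set.mem_inter_iff, Set.mem_ofPred_eq, Set.mem_empty_iff_false, iff_false, not_and]
    rintro ⟨-, hiτ⟩ hτj
    exact (hiτ.trans_le hτj).not_gt (WithTop.coe_lt_coe.mpr hji)

theorem IsStoppingTime.measurableSet_preimage_Iic {Ω ι : Type*} {m : MeasurableSpace Ω}
    [LinearOrder ι] {f : Filtration ι m} {T : Ω → ι}
    (hT : IsStoppingTime f (fun ω => (T ω : WithTop ι))) (i : ι) :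
    MeasurableSet[f i] (T ⁻¹' Set.Iic i) := by
  have h := hT i
  simp only [WithTop.coe_le_coe] at h
  exact h

theorem IsStoppingTime.measurableSet_inter_preimage_Ioc {Ω ι : Type*} {m : MeasurableSpace Ω}
    [LinearOrder ι] {f : Filtration ι m} {T : Ω → ι}
    (hT : IsStoppingTime f (fun ω => (T ω : WithTop ι))) {s : ι} (t : ι) {B : Set Ω}
    (hB : MeasurableSet[f s] B) :
    MeasurableSet[hT.measurableSpace] (B ∩ T ⁻¹' Set.Ioc s t) := by
  have h : B ∩ T ⁻¹' Set.Ioc s t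
      = (B ∩ {ω | s < (T ω : WithTop ι)}) ∩ {ω | (T ω : WithTop ι) ≤ t} := by
    ext ω
    simp [and_assoc]
  rw [h]
  exact (hT.measurableSet_inter_gt hB).inter (hT.measurableSet_le' t)

end MeasureTheory

theorem abs_indicator_one_mul_le {Ω : Type*} {A : Set Ω} {N : Ω → ℝ} {C : ℝ}
    (hC : ∀ ω, |N ω| ≤ C) (ω : Ω) : |A.indicator (fun _ => (1 : ℝ)) ω * N ω| ≤ C := by
  rw [← Set.indicator_mul_left, funext fun ω => one_mul (N ω)]
  exact (norm_indicator_le_norm_self N ω).trans (hC ω)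

theorem integrable_indicator_one_mul_mul {Ω : Type*} {mΩ : MeasurableSpace Ω} {P : Measure Ω}
    {A : Set Ω} (hA : MeasurableSet A) {N X : Ω → ℝ} (hN : AEStronglyMeasurable N P)
    (hN_bdd : ∃ C, ∀ ω, |N ω| ≤ C) (hX : Integrable X P) :
    Integrable (fun ω => A.indicator (fun _ => (1 : ℝ)) ω * N ω * X ω) P := by
  obtain ⟨C, hC⟩ := hN_bdd
  exact hX.bdd_mul ((aestronglyMeasurable_const.indicator hA).mul hN)
    (ae_of_all _ fun ω => abs_indicator_one_mul_le hC ω)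

section CondExp

variable {Ω : Type*} {mΩ : MeasurableSpace Ω} {P : Measure Ω}

theorem integral_mul_eq_integral_mul_of_ae_eq_condExp {m : MeasurableSpace Ω} (hm : m ≤ mΩ)
    [SigmaFinite (P.trim hm)] {g ξ ζ : Ω → ℝ} (hg : StronglyMeasurable[m] g)
    (hgξ : Integrable (g * ξ) P) (hξ : Integrable ξ P) (hζ : ζ =ᵐ[P] P[ξ | m]) :
    ∫ ω, g ω * ξ ω ∂P = ∫ ω, g ω * ζ ω ∂P := by
  calc ∫ ω, g ω * ξ ω ∂P = ∫ ω, (P[g * ξ | m]) ω ∂P := (integral_condExp hm).symm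
    _ = ∫ ω, g ω * ζ ω ∂P := by
      refine integral_congr_ae ?_
      filter_upwards [condExp_mul_of_stronglyMeasurable_left hg hgξ hξ, hζ] with ω h₁ h₂
      rw [h₁, Pi.mul_apply, h₂]

/-- The tower property is unavailable since `m' ≤ m` fails in the application (`m' = 𝓕_s`,
`m = 𝓕_T`); `m`-measurability of the localisations `1_B g`, `B ∈ m'`, replaces it. -/
theorem condExp_mul_ae_eq_condExp_mul_of_ae_eq_condExp {m m' : MeasurableSpace Ω}
    (hm : m ≤ mΩ) (hm' : m' ≤ mΩ) [SigmaFinite (P.trim hm)] [SigmaFinite (P.trim hm')]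
    {g ξ ζ : Ω → ℝ} (hg : ∀ B, MeasurableSet[m'] B → StronglyMeasurable[m] (B.indicator g))
    (hg_bdd : ∃ C, ∀ ω, |g ω| ≤ C) (hξ : Integrable ξ P) (hζ : ζ =ᵐ[P] P[ξ | m]) :
    P[fun ω => g ω * ξ ω | m'] =ᵐ[P] P[fun ω => g ω * ζ ω | m'] := by
  obtain ⟨C, hC⟩ := hg_bdd
  have hζ_int : Integrable ζ P := integrable_condExp.congr hζ.symm
  have h_int : ∀ {X : Ω → ℝ}, Integrable X P → ∀ B, MeasurableSet[m'] B →
      Integrable (fun ω => B.indicator g ω * X ω) P := fun hX B hB =>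
    hX.bdd_mul ((hg B hB).mono hm).aestronglyMeasurable (ae_of_all _ fun ω =>
      (norm_indicator_le_norm_self g ω).trans (hC ω))
  have h_set : ∀ X : Ω → ℝ, ∀ B, MeasurableSet[m'] B →
      ∫ ω in B, g ω * X ω ∂P = ∫ ω, B.indicator g ω * X ω ∂P := fun X B hB => by
    rw [← integral_indicator (hm' B hB)]
    simp only [Set.indicator_mul_left]
  have h_univ : Set.univ.indicator g = g := Set.indicator_univ g
  refine (ae_eq_condExp_of_forall_setIntegral_eq hm' (h_univ ▸ h_int hξ _ .univ)
    (fun _ _ _ => integrable_condExp.integrableOn) (fun B hB _ => ?_)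
    stronglyMeasurable_condExp.aestronglyMeasurable).symm
  rw [setIntegral_condExp hm' (h_univ ▸ h_int hζ_int _ .univ) hB, h_set _ B hB, h_set _ B hB]
  exact (integral_mul_eq_integral_mul_of_ae_eq_condExp hm (hg B hB) (h_int hξ B hB) hξ hζ).symm

theorem condExp_sub_sub_ae_eq_zero [IsFiniteMeasure P] {m₁ m₂ : MeasurableSpace Ω}
    (hm₁₂ : m₁ ≤ m₂) (hm₂ : m₂ ≤ mΩ) {F₁ F₂ G₁ G₂ : Ω → ℝ} (hF₁ : Integrable F₁ P)
    (hF₂ : Integrable F₂ P) (hG₁ : Integrable G₁ P) (hG₂ : Integrable G₂ P)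
    (h : P[F₂ - F₁ | m₁] =ᵐ[P] P[G₂ - G₁ | m₁]) :
    P[(P[F₂ | m₂] - G₂) - (P[F₁ | m₁] - G₁) | m₁] =ᵐ[P] 0 := by
  have h_tower : P[P[F₂ | m₂] - P[F₁ | m₁] | m₁] =ᵐ[P] P[F₂ - F₁ | m₁] := by
    filter_upwards [condExp_sub (f := P[F₂ | m₂]) (g := P[F₁ | m₁]) integrable_condExp
        integrable_condExp m₁, condExp_condExp_of_le (f := F₂) hm₁₂ hm₂,
      condExp_condExp_of_le (f := F₁) le_rfl (hm₁₂.trans hm₂),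
      condExp_sub hF₂ hF₁ m₁] with ω h₁ h₂ h₃ h₄
    simp only [Pi.sub_apply] at h₁ h₄ ⊢
    rw [h₁, h₂, h₃, h₄]
  calc P[(P[F₂ | m₂] - G₂) - (P[F₁ | m₁] - G₁) | m₁]
      = P[(P[F₂ | m₂] - P[F₁ | m₁]) - (G₂ - G₁) | m₁] := by rw [sub_sub_sub_comm]
    _ =ᵐ[P] P[P[F₂ | m₂] - P[F₁ | m₁] | m₁] - P[G₂ - G₁ | m₁] :=
      condExp_sub (integrable_condExp.sub integrable_condExp) (hG₂.sub hG₁) m₁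
    _ =ᵐ[P] P[F₂ - F₁ | m₁] - P[G₂ - G₁ | m₁] := h_tower.sub Filter.EventuallyEq.rfl
    _ =ᵐ[P] 0 := by
      filter_upwards [h] with ω hω
      simp [hω]

end CondExp

section StoppingTimes

variable {Ω ι : Type*} [mΩ : MeasurableSpace Ω] {P : Measure Ω} [IsFiniteMeasure P]
  [LinearOrder ι] {ℱ : Filtration ι mΩ}

theorem condExp_indicator_preimage_Ioc_mul_ae_eq {T : Ω → ι}
    (hT : IsStoppingTime ℱ (fun ω => (T ω : WithTop ι))) {N ξ ζ : Ω → ℝ}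
    (hN : Measurable[hT.measurableSpace] N) (hN_bdd : ∃ C, ∀ ω, |N ω| ≤ C)
    (hξ : Integrable ξ P) (hζ : ζ =ᵐ[P] P[ξ | hT.measurableSpace]) (s t : ι) :
    P[fun ω => (T ⁻¹' Set.Ioc s t).indicator (fun _ => (1 : ℝ)) ω * N ω * ξ ω | ℱ s]
      =ᵐ[P] P[fun ω => (T ⁻¹' Set.Ioc s t).indicator (fun _ => (1 : ℝ)) ω * N ω * ζ ω | ℱ s] := by
  obtain ⟨C, hC⟩ := hN_bdd
  refine condExp_mul_ae_eq_condExp_mul_of_ae_eq_condExp hT.measurableSpace_le (ℱ.le s)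
    (fun B hB => ?_) ⟨C, abs_indicator_one_mul_le hC⟩ hξ hζ
  have h_eq : B.indicator (fun ω => (T ⁻¹' Set.Ioc s t).indicator (fun _ => (1 : ℝ)) ω * N ω)
      = fun ω => (B ∩ T ⁻¹' Set.Ioc s t).indicator (fun _ => (1 : ℝ)) ω * N ω := by
    ext ω
    rw [Set.indicator_mul_left, Set.indicator_indicator]
  rw [h_eq]
  exact (stronglyMeasurable_const.indicator (hT.measurableSet_inter_preimage_Ioc t hB)).mul
    hN.stronglyMeasurable

theorem condExp_sum_indicator_preimage_Ioc_mul_ae_eq {κ : Type*} [Fintype κ] {T : κ → Ω → ι}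
    (hT : ∀ k, IsStoppingTime ℱ (fun ω => (T k ω : WithTop ι))) {N ξ ζ : κ → Ω → ℝ}
    (hN : ∀ k, Measurable[(hT k).measurableSpace] (N k)) (hN_bdd : ∀ k, ∃ C, ∀ ω, |N k ω| ≤ C)
    (hξ : ∀ k, Integrable (ξ k) P) (hζ : ∀ k, ζ k =ᵐ[P] P[ξ k | (hT k).measurableSpace])
    (s t : ι) :
    P[fun ω => ∑ k, (T k ⁻¹' Set.Ioc s t).indicator (fun _ => (1 : ℝ)) ω * N k ω * ξ k ω | ℱ s]
      =ᵐ[P] P[fun ω => ∑ k, (T k ⁻¹' Set.Ioc s t).indicator (fun _ => (1 : ℝ)) ω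
        * N k ω * ζ k ω | ℱ s] := by
  have h_int (X : κ → Ω → ℝ) (hX : ∀ k, Integrable (X k) P) k :=
    integrable_indicator_one_mul_mul
      (by simpa using (hT k).measurableSpace_le _ ((hT k).measurableSet_inter_preimage_Ioc t
        (MeasurableSet.univ (m := ℱ s))))
      ((hN k).mono (hT k).measurableSpace_le le_rfl).aestronglyMeasurable (hN_bdd k) (hX k)
  have hζ_int k : Integrable (ζ k) P := integrable_condExp.congr (hζ k).symm
  rw [← Finset.sum_fn, ← Finset.sum_fn]
  exact (condExp_finsetSum (fun k _ => h_int ξ hξ k) _).trans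
    ((eventuallyEq_sum fun k _ =>
      condExp_indicator_preimage_Ioc_mul_ae_eq (hT k) (hN k) (hN_bdd k) (hξ k) (hζ k) s t).trans
      (condExp_finsetSum (fun k _ => h_int ζ hζ_int k) _).symm)

end StoppingTimes

theorem sum_indicator_preimage_Iic_sub_sum_indicator_preimage_Iic {Ω ι κ : Type*}
    [LinearOrder ι] [Fintype κ] (T : κ → Ω → ι) (N X : κ → Ω → ℝ) {s t : ι} (hst : s ≤ t) :
    (fun ω => ∑ k, (T k ⁻¹' Set.Iic t).indicator (fun _ => (1 : ℝ)) ω * N k ω * X k ω)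
      - (fun ω => ∑ k, (T k ⁻¹' Set.Iic s).indicator (fun _ => (1 : ℝ)) ω * N k ω * X k ω)
      = fun ω => ∑ k, (T k ⁻¹' Set.Ioc s t).indicator (fun _ => (1 : ℝ)) ω * N k ω * X k ω := by
  ext ω
  simp only [Pi.sub_apply, ← Finset.sum_sub_distrib, ← sub_mul, ← Set.Iic_sdiff_Iic,
    Set.preimage_sdiff, Set.indicator_sdiff (Set.preimage_mono (Set.Iic_subset_Iic.2 hst))]

theorem stmt3_general {Ω : Type*} [mΩ : MeasurableSpace Ω] (P : Measure Ω) [IsProbabilityMeasure P]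
    (ℱ : Filtration ℝ mΩ) (K : ℕ)
    (T : Fin K → Ω → ℝ) (hT : ∀ i, IsStoppingTime ℱ (fun ω => ((T i ω : ℝ) : WithTop ℝ)))
    (ξ N ζ : Fin K → Ω → ℝ)
    (hξmeas : ∀ i, Measurable (ξ i)) (hξbd : ∀ i, ∃ C : ℝ, ∀ ω, |ξ i ω| ≤ C)
    (hNmeas : ∀ i, Measurable[(hT i).measurableSpace] (N i))
    (hNbd : ∀ i, ∃ C : ℝ, ∀ ω, |N i ω| ≤ C)
    (hζ : ∀ i, ζ i =ᵐ[P] P[ξ i | (hT i).measurableSpace])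
    (s t : ℝ) (hst : s ≤ t) :
    (P[(fun ω => ∑ i, (T i ⁻¹' Set.Ioc s t).indicator (fun _ => (1 : ℝ)) ω
          * N i ω * ξ i ω) | ℱ s]
      =ᵐ[P] P[(fun ω => ∑ i, (T i ⁻¹' Set.Ioc s t).indicator (fun _ => (1 : ℝ)) ω
          * N i ω * ζ i ω) | ℱ s])
    ∧
    (P[(fun ω =>
        ((P[(fun ω' => ∑ i, (T i ⁻¹' Set.Iic t).indicator (fun _ => (1 : ℝ)) ω'
              * N i ω' * ξ i ω') | ℱ t]) ω
          - ∑ i, (T i ⁻¹' Set.Iic t).indicator (fun _ => (1 : ℝ)) ω * N i ω * ζ i ω)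
        - ((P[(fun ω' => ∑ i, (T i ⁻¹' Set.Iic s).indicator (fun _ => (1 : ℝ)) ω'
              * N i ω' * ξ i ω') | ℱ s]) ω
          - ∑ i, (T i ⁻¹' Set.Iic s).indicator (fun _ => (1 : ℝ)) ω * N i ω * ζ i ω)) | ℱ s]
      =ᵐ[P] 0) := by
  have hξ i : Integrable (ξ i) P :=
    let ⟨C, hC⟩ := hξbd i
    (integrable_const C).mono' (hξmeas i).aestronglyMeasurable (ae_of_all _ hC)
  have hζ_int i : Integrable (ζ i) P := integrable_condExp.congr (hζ i).symm
  have hIic (u : ℝ) i : MeasurableSet (T i ⁻¹' Set.Iic u) :=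
    ℱ.le u _ ((hT i).measurableSet_preimage_Iic u)
  have h_int (u : ℝ) (X : Fin K → Ω → ℝ) (hX : ∀ i, Integrable (X i) P) :
      Integrable (fun ω => ∑ i, (T i ⁻¹' Set.Iic u).indicator (fun _ => (1 : ℝ)) ω
        * N i ω * X i ω) P :=
    integrable_finsetSum _ fun i _ => integrable_indicator_one_mul_mul (hIic u i)
      ((hNmeas i).mono (hT i).measurableSpace_le le_rfl).aestronglyMeasurable (hNbd i) (hX i)
  have h_incr := condExp_sum_indicator_preimage_Ioc_mul_ae_eq hT hNmeas hNbd hξ hζ s t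
  refine ⟨h_incr, condExp_sub_sub_ae_eq_zero (ℱ.mono hst) (ℱ.le t) (h_int s ξ hξ) (h_int t ξ hξ)
    (h_int s ζ hζ_int) (h_int t ζ hζ_int) ?_⟩
  rwa [sum_indicator_preimage_Iic_sub_sum_indicator_preimage_Iic _ _ _ hst,
    sum_indicator_preimage_Iic_sub_sum_indicator_preimage_Iic _ _ _ hst]

/-- Stopping-time form of the predictable-jump compensating lemma: with stopping times `Tᵢ`,
bounded `ξᵢ`, bounded `𝓕_{Tᵢ}`-measurable `Nᵢ` and `ζᵢ` an `𝓕_{Tᵢ}`-measurable version of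
`E[ξᵢ | 𝓕_{Tᵢ}]`, conditioning `Σᵢ 1_{s<Tᵢ≤t} Nᵢ ξᵢ` and `Σᵢ 1_{s<Tᵢ≤t} Nᵢ ζᵢ` on `𝓕_s`
give the same result a.s.; consequently the compensated process
`M_t = E[Σᵢ 1_{Tᵢ≤t} Nᵢ ξᵢ | 𝓕_t] − Σᵢ 1_{Tᵢ≤t} Nᵢ ζᵢ` has centered increments given the past. -/
theorem stmt3 {Ω : Type*} [mΩ : MeasurableSpace Ω] (P : Measure Ω) [IsProbabilityMeasure P]
    (ℱ : Filtration ℝ mΩ) (K : ℕ)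
    (T : Fin K → Ω → ℝ) (hT : ∀ i, IsStoppingTime ℱ (fun ω => ((T i ω : ℝ) : WithTop ℝ)))
    (ξ N ζ : Fin K → Ω → ℝ)
    (hξmeas : ∀ i, Measurable (ξ i)) (hξbd : ∀ i, ∃ C : ℝ, ∀ ω, |ξ i ω| ≤ C)
    (hNmeas : ∀ i, Measurable[(hT i).measurableSpace] (N i))
    (hNbd : ∀ i, ∃ C : ℝ, ∀ ω, |N i ω| ≤ C)
    (hζmeas : ∀ i, Measurable[(hT i).measurableSpace] (ζ i))
    (hζ : ∀ i, ζ i =ᵐ[P] P[ξ i | (hT i).measurableSpace])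
    (s t : ℝ) (hs : 0 ≤ s) (hst : s ≤ t) :
    (P[(fun ω => ∑ i, (T i ⁻¹' Set.Ioc s t).indicator (fun _ => (1 : ℝ)) ω
          * N i ω * ξ i ω) | ℱ s]
      =ᵐ[P] P[(fun ω => ∑ i, (T i ⁻¹' Set.Ioc s t).indicator (fun _ => (1 : ℝ)) ω
          * N i ω * ζ i ω) | ℱ s])
    ∧
    (P[(fun ω =>
        ((P[(fun ω' => ∑ i, (T i ⁻¹' Set.Iic t).indicator (fun _ => (1 : ℝ)) ω'
              * N i ω' * ξ i ω') | ℱ t]) ω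
          - ∑ i, (T i ⁻¹' Set.Iic t).indicator (fun _ => (1 : ℝ)) ω * N i ω * ζ i ω)
        - ((P[(fun ω' => ∑ i, (T i ⁻¹' Set.Iic s).indicator (fun _ => (1 : ℝ)) ω'
              * N i ω' * ξ i ω') | ℱ s]) ω
          - ∑ i, (T i ⁻¹' Set.Iic s).indicator (fun _ => (1 : ℝ)) ω * N i ω * ζ i ω)) | ℱ s]
      =ᵐ[P] 0) :=
  stmt3_general (mΩ := mΩ) P ℱ K T hT ξ N ζ hξmeas hξbd hNmeas hNbd hζ s t hst
end

section
/- Let (Ω, 𝓕, P) be a probability space, G ⊆ 𝓕 a sub-σ-algebra, and Z : Ω → (0,∞) an integrable random variable with E_P[Z] = 1. Let P′ := P.withDensity Z, a probability measure equivalent to P. Then for every P-integrable real random variable X one has, almost surely, E_{P′}[X · Z⁻¹ | G] = E_P[X | G] · E_{P′}[Z⁻¹ | G]; moreover E_{P′}[Z⁻¹ | G] > 0 almost surely, so that E_P[X | G] = E_{P′}[X Z⁻¹ | G] / E_{P′}[Z⁻¹ | G] a.s. -/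
/-!
Write `g := E_P[Z | G]`. Pulling the `G`-measurable factor `E_{P'}[f | G]` out of `E_P[· | G]` and
using `∫_s f dP' = ∫_s f Z dP` gives the abstract Bayes formula
`E_P[f Z | G] = E_{P'}[f | G] · g` for every `P'`-integrable `f`. With `f = X Z⁻¹` and `f = Z⁻¹`
it yields `E_{P'}[X Z⁻¹ | G] · g = E_P[X | G]` and `E_{P'}[Z⁻¹ | G] = g⁻¹`. Finally `g > 0` a.s.:
on `{g ≤ 0} ∈ G` the integral of `Z > 0` equals that of `g`, so this set is null.
-/

namespace MeasureTheory

variable {Ω : Type*} {m mΩ : MeasurableSpace Ω} {μ : Measure Ω} {Z : Ω → ℝ}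

theorem integrable_withDensity_ofReal_iff (hZ : Measurable Z) (hZ_nonneg : 0 ≤ᵐ[μ] Z)
    {f : Ω → ℝ} :
    Integrable f (μ.withDensity fun ω => ENNReal.ofReal (Z ω)) ↔
      Integrable (fun ω => f ω * Z ω) μ := by
  rw [integrable_withDensity_iff hZ.ennreal_ofReal (ae_of_all _ fun _ => ENNReal.ofReal_lt_top)]
  refine integrable_congr ?_
  filter_upwards [hZ_nonneg] with ω hω
  rw [ENNReal.toReal_ofReal hω]

theorem setIntegral_withDensity_ofReal (hZ : Measurable Z) (hZ_nonneg : 0 ≤ᵐ[μ] Z)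
    (f : Ω → ℝ) {s : Set Ω} (hs : MeasurableSet s) :
    ∫ ω in s, f ω ∂μ.withDensity (fun ω => ENNReal.ofReal (Z ω)) = ∫ ω in s, f ω * Z ω ∂μ := by
  rw [setIntegral_withDensity_eq_setIntegral_toReal_smul hZ.ennreal_ofReal
    (ae_of_all _ fun _ => ENNReal.ofReal_lt_top) f hs]
  refine setIntegral_congr_ae hs ?_
  filter_upwards [hZ_nonneg] with ω hω _
  rw [ENNReal.toReal_ofReal hω, smul_eq_mul, mul_comm]

theorem condExp_mul_density_ae_eq (hm : m ≤ mΩ) [SigmaFinite (μ.trim hm)]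
    (hZ : Measurable Z) (hZ_nonneg : 0 ≤ᵐ[μ] Z) (hZ_int : Integrable Z μ) {f : Ω → ℝ}
    (hf : Integrable f (μ.withDensity fun ω => ENNReal.ofReal (Z ω))) :
    μ[fun ω => f ω * Z ω | m] =ᵐ[μ]
      fun ω => (μ.withDensity fun ω => ENNReal.ofReal (Z ω))[f | m] ω * μ[Z | m] ω := by
  set ν := μ.withDensity fun ω => ENNReal.ofReal (Z ω)
  have : IsFiniteMeasure ν := isFiniteMeasure_withDensity_ofReal hZ_int.2
  set W := ν[f | m]
  have hW : StronglyMeasurable[m] W := stronglyMeasurable_condExp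
  have hWZ : Integrable (fun ω => W ω * Z ω) μ :=
    (integrable_withDensity_ofReal_iff hZ hZ_nonneg).1 integrable_condExp
  have hpull : μ[fun ω => W ω * Z ω | m] =ᵐ[μ] fun ω => W ω * μ[Z | m] ω :=
    condExp_mul_of_stronglyMeasurable_left hW hWZ hZ_int
  refine (ae_eq_condExp_of_forall_setIntegral_eq hm
    ((integrable_withDensity_ofReal_iff hZ hZ_nonneg).1 hf)
    (fun s _ _ => (integrable_condExp.congr hpull).integrableOn) (fun s hs _ => ?_)
    (hW.mul stronglyMeasurable_condExp).aestronglyMeasurable).symm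
  calc ∫ ω in s, W ω * μ[Z | m] ω ∂μ
      = ∫ ω in s, μ[fun ω => W ω * Z ω | m] ω ∂μ :=
        setIntegral_congr_ae (hm s hs) (hpull.mono fun ω hω _ => hω.symm)
    _ = ∫ ω in s, W ω * Z ω ∂μ := setIntegral_condExp hm hWZ hs
    _ = ∫ ω in s, W ω ∂ν := (setIntegral_withDensity_ofReal hZ hZ_nonneg W (hm s hs)).symm
    _ = ∫ ω in s, f ω ∂ν := setIntegral_condExp hm hf hs
    _ = ∫ ω in s, f ω * Z ω ∂μ := setIntegral_withDensity_ofReal hZ hZ_nonneg f (hm s hs)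

theorem condExp_pos_of_pos (hm : m ≤ mΩ) [SigmaFinite (μ.trim hm)] (hZ_int : Integrable Z μ)
    (hZ_pos : ∀ᵐ ω ∂μ, 0 < Z ω) : ∀ᵐ ω ∂μ, 0 < μ[Z | m] ω := by
  set s := {ω | μ[Z | m] ω ≤ 0}
  have hs : MeasurableSet[m] s :=
    (stronglyMeasurable_condExp (m := m) (μ := μ) (f := Z)).measurable measurableSet_Iic
  have hZ_nonneg : 0 ≤ᵐ[μ.restrict s] Z := ae_restrict_of_ae (hZ_pos.mono fun _ h => h.le)
  have hZs : ∫ ω in s, Z ω ∂μ = 0 := by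
    refine le_antisymm ?_ (integral_nonneg_of_ae hZ_nonneg)
    rw [← setIntegral_condExp hm hZ_int hs]
    exact setIntegral_nonpos (hm s hs) fun _ h => h
  have hZ_zero := (ae_restrict_iff' (hm s hs)).1
    ((setIntegral_eq_zero_iff_of_nonneg_ae hZ_nonneg hZ_int.integrableOn).1 hZs)
  filter_upwards [hZ_pos, hZ_zero] with ω hpos hzero
  exact not_le.1 fun h => hpos.ne' (hzero h)

theorem condExp_withDensity_mul_inv_mul_condExp (hm : m ≤ mΩ) [SigmaFinite (μ.trim hm)]
    (hZ : Measurable Z) (hZ_pos : ∀ᵐ ω ∂μ, 0 < Z ω) (hZ_int : Integrable Z μ) {Y : Ω → ℝ}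
    (hY : Integrable Y μ) :
    (fun ω => (μ.withDensity fun ω => ENNReal.ofReal (Z ω))[fun ω => Y ω * (Z ω)⁻¹ | m] ω
      * μ[Z | m] ω) =ᵐ[μ] μ[Y | m] := by
  have hZ_nonneg : 0 ≤ᵐ[μ] Z := hZ_pos.mono fun _ h => h.le
  have hYZ : (fun ω => Y ω * (Z ω)⁻¹ * Z ω) =ᵐ[μ] Y := by
    filter_upwards [hZ_pos] with ω h
    rw [inv_mul_cancel_right₀ h.ne']
  have hf := (integrable_withDensity_ofReal_iff hZ hZ_nonneg).2 (hY.congr hYZ.symm)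
  exact (condExp_mul_density_ae_eq hm hZ hZ_nonneg hZ_int hf).symm.trans (condExp_congr_ae hYZ)

theorem condExp_withDensity_inv_ae_eq [IsFiniteMeasure μ] (hm : m ≤ mΩ) (hZ : Measurable Z)
    (hZ_pos : ∀ᵐ ω ∂μ, 0 < Z ω) (hZ_int : Integrable Z μ) :
    (μ.withDensity fun ω => ENNReal.ofReal (Z ω))[fun ω => (Z ω)⁻¹ | m] =ᵐ[μ]
      fun ω => (μ[Z | m] ω)⁻¹ := by
  have h := condExp_withDensity_mul_inv_mul_condExp hm hZ hZ_pos hZ_int (integrable_const (1 : ℝ))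
  simp only [one_mul, condExp_const hm] at h
  filter_upwards [h] with ω hω
  exact eq_inv_of_mul_eq_one_left hω

end MeasureTheory

open MeasureTheory

theorem stmt4_general {Ω : Type*} (G : MeasurableSpace Ω) [mΩ : MeasurableSpace Ω]
    (P : Measure Ω) [IsProbabilityMeasure P] (hG : G ≤ mΩ)
    (Z : Ω → ℝ) (hZmeas : Measurable Z) (hZpos : ∀ ω, 0 < Z ω)
    (hZint : Integrable Z P)
    (P' : Measure Ω) (hP' : P' = P.withDensity (fun ω => ENNReal.ofReal (Z ω)))
    (X : Ω → ℝ) (hX : Integrable X P) :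
    (P'[(fun ω => X ω * (Z ω)⁻¹) | G]
        =ᵐ[P] fun ω => (P[X | G]) ω * (P'[(fun ω' => (Z ω')⁻¹) | G]) ω)
    ∧ (∀ᵐ ω ∂P, 0 < (P'[(fun ω' => (Z ω')⁻¹) | G]) ω)
    ∧ (P[X | G]
        =ᵐ[P] fun ω => (P'[(fun ω' => X ω' * (Z ω')⁻¹) | G]) ω
          / (P'[(fun ω' => (Z ω')⁻¹) | G]) ω) := by
  subst hP'
  have hZpos' : ∀ᵐ ω ∂P, 0 < Z ω := ae_of_all _ hZpos
  have hg := condExp_pos_of_pos hG hZint hZpos'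
  have hV := condExp_withDensity_inv_ae_eq hG hZmeas hZpos' hZint
  have hW := condExp_withDensity_mul_inv_mul_condExp hG hZmeas hZpos' hZint hX
  refine ⟨?_, ?_, ?_⟩
  · filter_upwards [hg, hV, hW] with ω hg hV hW
    rw [hV, ← hW, mul_inv_cancel_right₀ hg.ne']
  · filter_upwards [hg, hV] with ω hg hV
    exact hV ▸ inv_pos.2 hg
  · filter_upwards [hV, hW] with ω hV hW
    rw [hV, div_inv_eq_mul, hW]

/-- Abstract Bayes formula (Kallianpur–Striebel): for a strictly positive density `Z` with
`E_P[Z] = 1` and `P' = Z·P`, one has `E_{P'}[X Z⁻¹ | G] = E_P[X | G] · E_{P'}[Z⁻¹ | G]` a.s.,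
`E_{P'}[Z⁻¹ | G] > 0` a.s., and hence `E_P[X | G] = E_{P'}[X Z⁻¹ | G] / E_{P'}[Z⁻¹ | G]` a.s. -/
theorem stmt4 {Ω : Type*} (G : MeasurableSpace Ω) [mΩ : MeasurableSpace Ω]
    (P : Measure Ω) [IsProbabilityMeasure P] (hG : G ≤ mΩ)
    (Z : Ω → ℝ) (hZmeas : Measurable Z) (hZpos : ∀ ω, 0 < Z ω)
    (hZint : Integrable Z P) (hZmean : ∫ ω, Z ω ∂P = 1)
    (P' : Measure Ω) (hP' : P' = P.withDensity (fun ω => ENNReal.ofReal (Z ω)))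
    (X : Ω → ℝ) (hX : Integrable X P) :
    (P'[(fun ω => X ω * (Z ω)⁻¹) | G]
        =ᵐ[P] fun ω => (P[X | G]) ω * (P'[(fun ω' => (Z ω')⁻¹) | G]) ω)
    ∧ (∀ᵐ ω ∂P, 0 < (P'[(fun ω' => (Z ω')⁻¹) | G]) ω)
    ∧ (P[X | G]
        =ᵐ[P] fun ω => (P'[(fun ω' => X ω' * (Z ω')⁻¹) | G]) ω
          / (P'[(fun ω' => (Z ω')⁻¹) | G]) ω) :=
  stmt4_general G (mΩ := mΩ) P hG Z hZmeas hZpos hZint P' hP' X hX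
end

section
/- Let (Ω, 𝓕, P) be a probability space, G ⊆ 𝓕 a sub-σ-algebra, V : Ω → ℝⁿ measurable, and let κ be a Markov kernel from (Ω, G) to ℝⁿ such that for every bounded Borel g : ℝⁿ → ℝ the map ω ↦ ∫ g dκ(ω) is a version of E[g(V) | G]. Let F be a probability measure on ℝⁿ and L : Ω × ℝⁿ → [0,∞) a (G ⊗ Borel)-measurable function such that for P-almost every ω the measure (κ ω).withDensity (L(ω, ·)) equals F. Define Z(ω) := L(ω, V(ω)). Then (i) Z is integrable with E_P[Z] = 1, and (ii) for every bounded G-measurable W : Ω → ℝ and every bounded Borel g : ℝⁿ → ℝ, ∫ W(ω) g(V(ω)) Z(ω) dP(ω) = (∫ W dP) · (∫ g dF). In particular, under the changed measure P′ := P.withDensity Z the random vector V has law F and is independent of G. -/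
/-!
The conditional-law hypothesis says that the joint law of `(ω, V ω)` on `G ⊗ Borel` is
`P|_G ⊗ κ`, so integrals of `G ⊗ Borel`-measurable functions of `(ω, V ω)` may be computed by
integrating against `κ ω` first. For `1_A(ω) 1_B(y) L(ω, y)` the density hypothesis turns that
inner integral into `F B`, so under `P' = Z • P` the pair `(ω, V ω)` has law `P|_G ⊗ F`. All four
claims are read off this product law.
-/

open MeasureTheory ProbabilityTheory Set
open scoped ENNReal

section RandomElement

variable {Ω S β : Type*} [MeasurableSpace Ω] [MeasurableSpace S] [MeasurableSpace β]
  {P : Measure Ω} {X : Ω → S} {V : Ω → β}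

lemma map_prodMk_eq_map_compProd [IsFiniteMeasure P] (hX : Measurable X) (hV : Measurable V)
    (κ : Kernel S β) [IsSFiniteKernel κ]
    (hrect : ∀ A B, MeasurableSet A → MeasurableSet B →
      ∫⁻ ω in X ⁻¹' A, κ (X ω) B ∂P = P (X ⁻¹' A ∩ V ⁻¹' B)) :
    P.map (fun ω => (X ω, V ω)) = P.map X ⊗ₘ κ := by
  refine Measure.ext_prod fun {A B} hA hB => ?_
  rw [Measure.map_apply (hX.prodMk hV) (hA.prod hB), mk_preimage_prod, ← hrect A B hA hB,
    Measure.compProd_apply_prod hA hB, setLIntegral_map hA (κ.measurable_coe hB) hX]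

lemma lintegral_comp_prodMk_eq_lintegral_lintegral [IsFiniteMeasure P] (hX : Measurable X)
    (hV : Measurable V) (κ : Kernel S β) [IsSFiniteKernel κ]
    (hrect : ∀ A B, MeasurableSet A → MeasurableSet B →
      ∫⁻ ω in X ⁻¹' A, κ (X ω) B ∂P = P (X ⁻¹' A ∩ V ⁻¹' B))
    {f : S × β → ℝ≥0∞} (hf : Measurable f) :
    ∫⁻ ω, f (X ω, V ω) ∂P = ∫⁻ ω, ∫⁻ y, f (X ω, y) ∂κ (X ω) ∂P := by
  rw [← lintegral_map hf (hX.prodMk hV), map_prodMk_eq_map_compProd hX hV κ hrect,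
    Measure.lintegral_compProd hf, lintegral_map hf.lintegral_kernel_prod_right' hX]

lemma withDensity_preimage_inter_preimage_eq_mul {κ : S → Measure β} {F : Measure β}
    (hdis : ∀ f : S × β → ℝ≥0∞, Measurable f →
      ∫⁻ ω, f (X ω, V ω) ∂P = ∫⁻ ω, ∫⁻ y, f (X ω, y) ∂κ (X ω) ∂P)
    (hX : Measurable X) (hV : Measurable V) {ρ : S × β → ℝ≥0∞} (hρ : Measurable ρ)
    (hdens : ∀ᵐ ω ∂P, (κ (X ω)).withDensity (fun y => ρ (X ω, y)) = F)
    {A : Set S} (hA : MeasurableSet A) {B : Set β} (hB : MeasurableSet B) :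
    P.withDensity (fun ω => ρ (X ω, V ω)) (X ⁻¹' A ∩ V ⁻¹' B) = P (X ⁻¹' A) * F B := by
  have hinner : ∀ᵐ ω ∂P, ∫⁻ y, (A ×ˢ B).indicator ρ (X ω, y) ∂κ (X ω)
      = (X ⁻¹' A).indicator (fun _ => F B) ω := by
    filter_upwards [hdens] with ω hω
    by_cases hωA : X ω ∈ A
    · rw [indicator_of_mem (show ω ∈ X ⁻¹' A from hωA), ← hω, withDensity_apply _ hB,
        ← lintegral_indicator hB]
      congr 1 with y
      by_cases hy : y ∈ B <;> simp [hωA, hy]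
    · simp [hωA]
  rw [withDensity_apply _ ((hX hA).inter (hV hB)), ← lintegral_indicator ((hX hA).inter (hV hB))]
  calc ∫⁻ ω, (X ⁻¹' A ∩ V ⁻¹' B).indicator (fun ω => ρ (X ω, V ω)) ω ∂P
      = ∫⁻ ω, (A ×ˢ B).indicator ρ (X ω, V ω) ∂P := rfl
    _ = P (X ⁻¹' A) * F B := by
        rw [hdis _ (hρ.indicator (hA.prod hB)), lintegral_congr_ae hinner,
          lintegral_indicator_const (hX hA), mul_comm]

lemma map_prodMk_eq_prod {P' : Measure Ω} {μ : Measure S} [SigmaFinite μ] {F : Measure β}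
    [SigmaFinite F] (hX : Measurable X) (hV : Measurable V)
    (hrect : ∀ A B, MeasurableSet A → MeasurableSet B → P' (X ⁻¹' A ∩ V ⁻¹' B) = μ A * F B) :
    P'.map (fun ω => (X ω, V ω)) = μ.prod F :=
  (Measure.prod_eq fun A B hA hB => by
    rw [Measure.map_apply (hX.prodMk hV) (hA.prod hB), mk_preimage_prod, hrect A B hA hB]).symm

lemma integral_mul_comp_eq_mul_integral {P' : Measure Ω} {μ : Measure S} [SigmaFinite μ]
    {F : Measure β} [SigmaFinite F] (hX : Measurable X) (hV : Measurable V)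
    (hrect : ∀ A B, MeasurableSet A → MeasurableSet B → P' (X ⁻¹' A ∩ V ⁻¹' B) = μ A * F B)
    {W : S → ℝ} (hW : Measurable W) {g : β → ℝ} (hg : Measurable g) :
    ∫ ω, W (X ω) * g (V ω) ∂P' = (∫ x, W x ∂μ) * ∫ y, g y ∂F := by
  rw [← integral_prod_mul, ← map_prodMk_eq_prod hX hV hrect,
    integral_map (hX.prodMk hV).aemeasurable (by fun_prop)]

end RandomElement

section ConditionalLaw

variable {Ω β : Type*} {G : MeasurableSpace Ω} [mΩ : MeasurableSpace Ω] [mβ : MeasurableSpace β]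
  {P : Measure Ω} [IsFiniteMeasure P] {V : Ω → β}

lemma setLIntegral_eq_measure_inter_preimage (hG : G ≤ mΩ) (hV : Measurable V)
    {κ : Ω → Measure β} [∀ ω, IsProbabilityMeasure (κ ω)] {B : Set β} (hB : MeasurableSet B)
    (hκB : Measurable[G] fun ω => κ ω B)
    (hcond : (fun ω => (κ ω B).toReal) =ᵐ[P] P[(V ⁻¹' B).indicator (1 : Ω → ℝ) | G])
    {A : Set Ω} (hA : MeasurableSet[G] A) :
    ∫⁻ ω in A, κ ω B ∂P = P (A ∩ V ⁻¹' B) := by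
  have hA' : MeasurableSet A := hG _ hA
  have hreal : ∫ ω in A, (κ ω B).toReal ∂P = P.real (A ∩ V ⁻¹' B) := by
    rw [setIntegral_congr_ae hA' (hcond.mono fun _ h _ => h),
      setIntegral_condExp hG ((integrable_const 1).indicator (hV hB)) hA,
      integral_indicator_one (hV hB), measureReal_restrict_apply (hV hB), inter_comm]
  have hfin : ∫⁻ ω in A, κ ω B ∂P ≠ ∞ :=
    ne_top_of_le_ne_top (measure_ne_top P A) <| by
      simpa using setLIntegral_mono_ae (f := fun ω => κ ω B) (g := fun _ => 1)
        measurable_const.aemeasurable (.of_forall fun ω _ => prob_le_one)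
  rw [← ENNReal.toReal_eq_toReal_iff' hfin (measure_ne_top _ _), ← integral_toReal
    ((hκB.mono hG le_rfl).aemeasurable) (.of_forall fun ω => measure_lt_top _ _)]
  exact hreal

lemma lintegral_comp_prodMk_eq_of_condExp (hG : G ≤ mΩ) (hV : Measurable V)
    {κ : Ω → Measure β} (hκmeas : Measurable[G] κ) (hκprob : ∀ ω, IsProbabilityMeasure (κ ω))
    (hκcond : ∀ g : β → ℝ, Measurable g → (∃ C : ℝ, ∀ y, |g y| ≤ C) →
      (fun ω => ∫ y, g y ∂(κ ω)) =ᵐ[P] P[(fun ω => g (V ω)) | G])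
    {f : Ω × β → ℝ≥0∞} (hf : Measurable[G.prod mβ] f) :
    ∫⁻ ω, f (ω, V ω) ∂P = ∫⁻ ω, ∫⁻ y, f (ω, y) ∂κ ω ∂P := by
  have hκset : ∀ B, MeasurableSet B →
      (fun ω => (κ ω B).toReal) =ᵐ[P] P[(V ⁻¹' B).indicator (1 : Ω → ℝ) | G] := fun B hB => by
    have h := hκcond (B.indicator 1) (measurable_one.indicator hB)
      ⟨1, fun y => by by_cases hy : y ∈ B <;> simp [hy]⟩
    simp only [integral_indicator_one hB] at h
    exact h
  -- The random-element lemmas apply with `X = id`, viewed as a map from `(Ω, mΩ)` to `(Ω, G)`.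
  let k : Kernel[G] Ω β := @Kernel.mk Ω β G mβ κ hκmeas
  have : IsMarkovKernel k := ⟨fun ω => hκprob ω⟩
  exact @lintegral_comp_prodMk_eq_lintegral_lintegral Ω Ω β mΩ G mβ P id V _ (measurable_id'' hG)
    hV k _ (fun A B hA hB => setLIntegral_eq_measure_inter_preimage hG hV hB
      ((Measure.measurable_coe hB).comp hκmeas) (hκset B hB) hA) f hf

lemma integral_mul_comp_mul_density_eq_mul_integral (hG : G ≤ mΩ) (hV : Measurable V)
    {Z : Ω → ℝ} (hZm : Measurable Z) (hZnn : 0 ≤ᵐ[P] Z) {F : Measure β} [SigmaFinite F]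
    (hrect : ∀ A B, MeasurableSet[G] A → MeasurableSet B →
      P.withDensity (fun ω => ENNReal.ofReal (Z ω)) (A ∩ V ⁻¹' B) = P A * F B)
    {W : Ω → ℝ} (hW : Measurable[G] W) {g : β → ℝ} (hg : Measurable g) :
    ∫ ω, W ω * g (V ω) * Z ω ∂P = (∫ ω, W ω ∂P) * ∫ y, g y ∂F := by
  have hrect' : ∀ A B, MeasurableSet[G] A → MeasurableSet B →
      P.withDensity (fun ω => ENNReal.ofReal (Z ω)) (id ⁻¹' A ∩ V ⁻¹' B) = P.trim hG A * F B :=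
    fun A B hA hB => by rw [trim_measurableSet_eq hG hA]; exact hrect A B hA hB
  calc ∫ ω, W ω * g (V ω) * Z ω ∂P
      = ∫ ω, (ENNReal.ofReal (Z ω)).toReal • (W ω * g (V ω)) ∂P :=
        integral_congr_ae <| hZnn.mono fun ω hω => by simp [ENNReal.toReal_ofReal hω, mul_comm]
    _ = ∫ ω, W ω * g (V ω) ∂P.withDensity (fun ω => ENNReal.ofReal (Z ω)) :=
        (integral_withDensity_eq_integral_toReal_smul hZm.ennreal_ofReal
          (.of_forall fun _ => ENNReal.ofReal_lt_top) _).symm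
    _ = (∫ ω, W ω ∂P.trim hG) * ∫ y, g y ∂F :=
        @integral_mul_comp_eq_mul_integral Ω Ω β mΩ G _ id V _ (P.trim hG) _ F _
          (measurable_id'' hG) hV hrect' W hW g hg
    _ = (∫ ω, W ω ∂P) * ∫ y, g y ∂F := by rw [← integral_trim hG hW.stronglyMeasurable]

end ConditionalLaw

/-- Girsanov-type change of measure at a predictable time: if `κ` is a version of the conditional
law of `V` given `G`, `L(ω,·)` is a density with `(κ ω).withDensity (L(ω,·)) = F` a.e., and
`Z(ω) = L(ω, V(ω))`, then `Z` is integrable with `E_P[Z] = 1`,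
`∫ W·(g∘V)·Z dP = (∫ W dP)·(∫ g dF)` for all bounded `G`-measurable `W` and bounded Borel `g`;
in particular under `P' = Z·P` the vector `V` has law `F` and is independent of `G`. -/
theorem stmt5 {Ω : Type*} (G : MeasurableSpace Ω) [mΩ : MeasurableSpace Ω]
    (P : Measure Ω) [IsProbabilityMeasure P] (hG : G ≤ mΩ)
    {n : ℕ} (V : Ω → (Fin n → ℝ)) (hV : Measurable V)
    (κ : Ω → Measure (Fin n → ℝ)) (hκmeas : Measurable[G] κ)
    (hκprob : ∀ ω, IsProbabilityMeasure (κ ω))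
    (hκcond : ∀ g : (Fin n → ℝ) → ℝ, Measurable g → (∃ C : ℝ, ∀ y, |g y| ≤ C) →
      (fun ω => ∫ y, g y ∂(κ ω)) =ᵐ[P] P[(fun ω => g (V ω)) | G])
    (F : Measure (Fin n → ℝ)) [IsProbabilityMeasure F]
    (L : Ω → (Fin n → ℝ) → ℝ)
    (hLmeas : Measurable[G.prod inferInstance] (fun p : Ω × (Fin n → ℝ) => L p.1 p.2))
    (hLnonneg : ∀ ω y, 0 ≤ L ω y)
    (hLdens : ∀ᵐ ω ∂P, (κ ω).withDensity (fun y => ENNReal.ofReal (L ω y)) = F)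
    (Z : Ω → ℝ) (hZ : ∀ ω, Z ω = L ω (V ω)) :
    (Integrable Z P ∧ ∫ ω, Z ω ∂P = 1)
    ∧ (∀ W : Ω → ℝ, Measurable[G] W → (∃ C : ℝ, ∀ ω, |W ω| ≤ C) →
        ∀ g : (Fin n → ℝ) → ℝ, Measurable g → (∃ C : ℝ, ∀ y, |g y| ≤ C) →
        ∫ ω, W ω * g (V ω) * Z ω ∂P = (∫ ω, W ω ∂P) * (∫ y, g y ∂F))
    ∧ ((P.withDensity (fun ω => ENNReal.ofReal (Z ω))).map V = F)
    ∧ (ProbabilityTheory.Indep (MeasurableSpace.comap V inferInstance) G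
        (P.withDensity (fun ω => ENNReal.ofReal (Z ω)))) := by
  obtain rfl : Z = fun ω => L ω (V ω) := funext hZ
  set P' := P.withDensity fun ω => ENNReal.ofReal (L ω (V ω))
  have hrect : ∀ A B, MeasurableSet[G] A → MeasurableSet B → P' (A ∩ V ⁻¹' B) = P A * F B :=
    fun A B hA hB => @withDensity_preimage_inter_preimage_eq_mul Ω Ω _ mΩ G _ P id V κ F
      (fun f hf => lintegral_comp_prodMk_eq_of_condExp hG hV hκmeas hκprob hκcond hf)
      (measurable_id'' hG) hV (fun p => ENNReal.ofReal (L p.1 p.2))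
      (ENNReal.measurable_ofReal.comp hLmeas) hLdens A hA B hB
  have hlaw : ∀ B, MeasurableSet B → P' (V ⁻¹' B) = F B := fun B hB => by
    simpa using hrect univ B .univ hB
  have hmarg : ∀ A, MeasurableSet[G] A → P' A = P A := fun A hA => by
    simpa using hrect A univ hA .univ
  have hZm : Measurable fun ω => L ω (V ω) := hLmeas.comp ((measurable_id'' hG).prodMk hV)
  have hZnn : 0 ≤ᵐ[P] fun ω => L ω (V ω) := .of_forall fun ω => hLnonneg ω (V ω)
  have hZmass : ∫⁻ ω, ENNReal.ofReal (L ω (V ω)) ∂P = 1 := by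
    simpa [P', withDensity_apply] using hmarg univ .univ
  refine ⟨⟨⟨hZm.aestronglyMeasurable, ?_⟩, ?_⟩,
    fun W hW _ g hg _ => integral_mul_comp_mul_density_eq_mul_integral hG hV hZm hZnn hrect hW hg,
    Measure.ext fun B hB => by rw [Measure.map_apply hV hB, hlaw B hB], ?_⟩
  · rw [hasFiniteIntegral_iff_ofReal hZnn, hZmass]
    exact ENNReal.one_lt_top
  · rw [integral_eq_lintegral_of_nonneg_ae hZnn hZm.aestronglyMeasurable, hZmass,
      ENNReal.toReal_one]
  · rw [Indep_iff]
    rintro _ A ⟨B, hB, rfl⟩ hA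
    rw [inter_comm, hrect A B hA hB, hlaw B hB, hmarg A hA, mul_comm]
end

section
/- Let (Ω, 𝓕, P) be a probability space, G ⊆ 𝓕 a sub-σ-algebra, V : Ω → ℝⁿ measurable, and κ a Markov kernel from (Ω, G) to ℝⁿ such that for every bounded Borel g the map ω ↦ ∫ g dκ(ω) is a version of E[g(V) | G]. Let F be a probability measure on ℝⁿ, and L : Ω × ℝⁿ → [0,∞) a (G ⊗ Borel)-measurable function with (κ ω).withDensity (L(ω,·)) = F for P-a.e. ω, and assume additionally κ ω ({y : L(ω,y) = 0}) = 0 for P-a.e. ω. Set Z(ω) := L(ω, V(ω)) and P′ := P.withDensity Z. Then Z > 0 P-almost surely and E_{P′}[Z⁻¹ | G] = 1 P′-almost surely; equivalently, for every bounded G-measurable W, ∫ W · (Z⁻¹ − 1) dP′ = 0. -/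
/-!
Since `κ` is a regular version of the conditional law of `V` given `G`, the pushforward of `P`
under `ω ↦ (ω, V ω)`, seen on `G ⊗ Borel`, is `P|_G ⊗ κ`. Integrating `L(ω, ·)` first against
`κ ω` gives `F(ℝⁿ) = 1`, so `∫_A Z dP = P A` for `A ∈ G`: the change of measure `P ↦ P'`
does not move `G`-events. Likewise `P {Z = 0} = ∫ κ ω {L(ω,·) = 0} dP = 0`. Then for `A ∈ G`,
`∫_A Z⁻¹ dP' = ∫_A Z⁻¹ Z dP = P A = P' A`, which is `E_{P'}[Z⁻¹ | G] = 1`.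
-/

open MeasureTheory ProbabilityTheory
open scoped ENNReal

section Disintegration

variable {Ω β : Type*} {G mΩ : MeasurableSpace Ω} {mβ : MeasurableSpace β}

def IsCondDistrib (κ : Kernel[G] Ω β) (V : Ω → β) (P : Measure Ω) : Prop :=
  ∀ A, MeasurableSet[G] A → ∀ B, MeasurableSet B → ∫⁻ ω in A, κ ω B ∂P = P (A ∩ V ⁻¹' B)

variable {P : Measure Ω} [IsFiniteMeasure P] {V : Ω → β} {κ : Kernel[G] Ω β}

theorem isCondDistrib_of_ae_eq_condExp (hG : G ≤ mΩ) (hV : Measurable V) [IsFiniteKernel κ]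
    (hκ : ∀ B, MeasurableSet B → (fun ω => (κ ω).real B) =ᵐ[P] P[(V ⁻¹' B).indicator 1 | G]) :
    IsCondDistrib κ V P := by
  intro A hA B hB
  have hκB : Measurable fun ω => κ ω B := (κ.measurable_coe hB).mono hG le_rfl
  have hfinite : ∫⁻ ω in A, κ ω B ∂P ≠ ∞ := by
    refine ((lintegral_mono fun ω => κ.measure_le_bound ω B).trans_lt ?_).ne
    rw [lintegral_const]
    exact ENNReal.mul_lt_top κ.bound_lt_top (measure_lt_top _ _)
  have hreal : (∫⁻ ω in A, κ ω B ∂P).toReal = P.real (A ∩ V ⁻¹' B) := by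
    rw [← integral_toReal hκB.aemeasurable (ae_of_all _ fun ω => measure_lt_top (κ ω) B)]
    change ∫ ω in A, (κ ω).real B ∂P = _
    rw [setIntegral_congr_ae (hG _ hA) ((hκ B hB).mono fun _ h _ => h),
      setIntegral_condExp hG ((integrable_const 1).indicator (hV hB)) hA,
      setIntegral_indicator (hV hB), Pi.one_def, setIntegral_const, smul_eq_mul, mul_one]
  exact (ENNReal.toReal_eq_toReal_iff' hfinite (measure_ne_top _ _)).mp hreal

variable [IsSFiniteKernel κ]

theorem map_prodMk_eq_compProd_trim (hG : G ≤ mΩ) (hV : Measurable V) (hκ : IsCondDistrib κ V P) :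
    @Measure.map Ω (Ω × β) mΩ (G.prod mβ) (fun ω => (ω, V ω)) P = (P.trim hG) ⊗ₘ κ := by
  have hT : Measurable[mΩ, G.prod mβ] fun ω => (ω, V ω) := (measurable_id'' hG).prodMk hV
  have : IsFiniteMeasure (@Measure.map Ω (Ω × β) mΩ (G.prod mβ) (fun ω => (ω, V ω)) P) :=
    ⟨by rw [Measure.map_apply hT .univ]; exact measure_lt_top _ _⟩
  refine @Measure.ext_prod Ω β G mβ _ _ _ fun {A B} hA hB => ?_
  rw [Measure.map_apply hT (hA.prod hB), Measure.compProd_apply_prod hA hB,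
    setLIntegral_trim hG (κ.measurable_coe hB) hA, hκ A hA B hB]
  rfl

theorem setLIntegral_comp_prodMk_eq_setLIntegral_kernel (hG : G ≤ mΩ) (hV : Measurable V)
    (hκ : IsCondDistrib κ V P)
    {f : Ω × β → ℝ≥0∞} (hf : Measurable[G.prod mβ] f) {A : Set Ω} (hA : MeasurableSet[G] A) :
    ∫⁻ ω in A, f (ω, V ω) ∂P = ∫⁻ ω in A, ∫⁻ y, f (ω, y) ∂κ ω ∂P := by
  have hT : Measurable[mΩ, G.prod mβ] fun ω => (ω, V ω) := (measurable_id'' hG).prodMk hV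
  have h := @setLIntegral_map Ω (Ω × β) mΩ (G.prod mβ) P f _ _ (hA.prod .univ) hf hT
  rw [map_prodMk_eq_compProd_trim hG hV hκ, Measure.setLIntegral_compProd hf hA .univ] at h
  simp only [Measure.restrict_univ, Set.mk_preimage_prod, Set.preimage_id', Set.preimage_univ,
    Set.inter_univ] at h
  rw [setLIntegral_trim hG hf.lintegral_kernel_prod_right' hA] at h
  exact h.symm

theorem measure_prodMk_preimage_eq_lintegral_kernel (hG : G ≤ mΩ) (hV : Measurable V)
    (hκ : IsCondDistrib κ V P)
    {S : Set (Ω × β)} (hS : MeasurableSet[G.prod mβ] S) :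
    P ((fun ω => (ω, V ω)) ⁻¹' S) = ∫⁻ ω, κ ω (Prod.mk ω ⁻¹' S) ∂P := by
  have hT : Measurable[mΩ, G.prod mβ] fun ω => (ω, V ω) := (measurable_id'' hG).prodMk hV
  rw [← @Measure.map_apply Ω (Ω × β) mΩ (G.prod mβ) P _ hT S hS,
    map_prodMk_eq_compProd_trim hG hV hκ, Measure.compProd_apply hS,
    lintegral_trim hG (κ.measurable_kernel_prodMk_left hS)]

theorem setLIntegral_comp_prodMk_eq_measure (hG : G ≤ mΩ) (hV : Measurable V)
    (hκ : IsCondDistrib κ V P) {ℓ : Ω → β → ℝ≥0∞}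
    (hℓ : Measurable[G.prod mβ] fun p : Ω × β => ℓ p.1 p.2)
    (hℓ_mass : ∀ᵐ ω ∂P, ∫⁻ y, ℓ ω y ∂κ ω = 1) {A : Set Ω} (hA : MeasurableSet[G] A) :
    ∫⁻ ω in A, ℓ ω (V ω) ∂P = P A := by
  calc ∫⁻ ω in A, ℓ ω (V ω) ∂P = ∫⁻ ω in A, ∫⁻ y, ℓ ω y ∂κ ω ∂P :=
        setLIntegral_comp_prodMk_eq_setLIntegral_kernel hG hV hκ hℓ hA
    _ = P A := by
      rw [setLIntegral_congr_fun_ae (hG _ hA) (hℓ_mass.mono fun ω h _ => h), setLIntegral_one]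

theorem ae_prodMk_notMem (hG : G ≤ mΩ) (hV : Measurable V) (hκ : IsCondDistrib κ V P)
    {S : Set (Ω × β)} (hS : MeasurableSet[G.prod mβ] S)
    (hS_null : ∀ᵐ ω ∂P, κ ω (Prod.mk ω ⁻¹' S) = 0) :
    ∀ᵐ ω ∂P, (ω, V ω) ∉ S := by
  have h := measure_prodMk_preimage_eq_lintegral_kernel hG hV hκ hS
  rw [lintegral_congr_ae hS_null, lintegral_zero] at h
  exact measure_eq_zero_iff_ae_notMem.mp h

end Disintegration

section ChangeOfMeasure

variable {Ω : Type*} {m mΩ : MeasurableSpace Ω} {μ : Measure Ω} {Z : Ω → ℝ}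

theorem integrable_inv_withDensity_ofReal [IsFiniteMeasure μ] (hZ : Measurable Z)
    (hZ_pos : ∀ᵐ ω ∂μ, 0 < Z ω) :
    Integrable (fun ω => (Z ω)⁻¹) (μ.withDensity fun ω => ENNReal.ofReal (Z ω)) := by
  rw [integrable_withDensity_iff_integrable_smul' hZ.ennreal_ofReal
    (ae_of_all _ fun _ => ENNReal.ofReal_lt_top)]
  refine (integrable_const (1 : ℝ)).congr (hZ_pos.mono fun ω h => ?_)
  simp [ENNReal.toReal_ofReal h.le, h.ne']

theorem condExp_inv_withDensity_ofReal_ae_eq_one (hm : m ≤ mΩ) [IsFiniteMeasure μ]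
    (hZ : Measurable Z) (hZ_pos : ∀ᵐ ω ∂μ, 0 < Z ω)
    (hZ_mass : ∀ s, MeasurableSet[m] s → ∫⁻ ω in s, ENNReal.ofReal (Z ω) ∂μ = μ s) :
    (μ.withDensity fun ω => ENNReal.ofReal (Z ω))[fun ω => (Z ω)⁻¹ | m]
      =ᵐ[μ.withDensity fun ω => ENNReal.ofReal (Z ω)] fun _ => (1 : ℝ) := by
  set μ' := μ.withDensity fun ω => ENNReal.ofReal (Z ω)
  have hμ' : ∀ s, MeasurableSet[m] s → μ' s = μ s := fun s hs => by
    rw [withDensity_apply _ (hm s hs), hZ_mass s hs]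
  have : IsFiniteMeasure μ' := ⟨by rw [hμ' _ .univ]; exact measure_lt_top _ _⟩
  refine (ae_eq_condExp_of_forall_setIntegral_eq hm (integrable_inv_withDensity_ofReal hZ hZ_pos)
    (fun s _ hs => integrableOn_const hs.ne) (fun s hs _ => Eq.symm ?_)
    aestronglyMeasurable_const).symm
  have hZ_mul_inv : ∀ᵐ ω ∂μ, (ENNReal.ofReal (Z ω)).toReal • (Z ω)⁻¹ = 1 :=
    hZ_pos.mono fun ω h => by rw [ENNReal.toReal_ofReal h.le, smul_eq_mul, mul_inv_cancel₀ h.ne']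
  rw [setIntegral_withDensity_eq_setIntegral_toReal_smul hZ.ennreal_ofReal
      (ae_of_all _ fun _ => ENNReal.ofReal_lt_top) _ (hm s hs),
    setIntegral_congr_ae (hm s hs) (hZ_mul_inv.mono fun _ h _ => h), setIntegral_const,
    setIntegral_const, Measure.real, Measure.real, hμ' s hs]

end ChangeOfMeasure

theorem integral_mul_eq_zero_of_condExp_ae_eq_zero {Ω : Type*} {m mΩ : MeasurableSpace Ω}
    (hm : m ≤ mΩ) {μ : Measure Ω} [SigmaFinite (μ.trim hm)] {W g : Ω → ℝ}
    (hW : StronglyMeasurable[m] W) (hW_bdd : ∃ C, ∀ ω, |W ω| ≤ C) (hg : Integrable g μ)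
    (hg_zero : μ[g | m] =ᵐ[μ] 0) :
    ∫ ω, W ω * g ω ∂μ = 0 := by
  obtain ⟨C, hC⟩ := hW_bdd
  have hWg : Integrable (W * g) μ :=
    hg.bdd_mul (hW.mono hm).aestronglyMeasurable (ae_of_all _ hC)
  calc ∫ ω, W ω * g ω ∂μ = ∫ ω, μ[W * g | m] ω ∂μ := (integral_condExp hm).symm
    _ = ∫ ω, W ω * μ[g | m] ω ∂μ :=
      integral_congr_ae (condExp_mul_of_stronglyMeasurable_left hW hWg hg)
    _ = 0 := by
      rw [integral_congr_ae (hg_zero.mono fun ω h => by rw [h, Pi.zero_apply, mul_zero])]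
      exact integral_zero _ _

/-- One-step form of the martingale property of the unnormalized mass `ρ(1) = Z⁻¹`: if moreover
`κ ω ({L(ω,·) = 0}) = 0` a.e., then `Z > 0` `P`-a.s., `E_{P'}[Z⁻¹ | G] = 1` `P'`-a.s., and
equivalently `∫ W (Z⁻¹ − 1) dP' = 0` for every bounded `G`-measurable `W`. -/
theorem stmt6 {Ω : Type*} (G : MeasurableSpace Ω) [mΩ : MeasurableSpace Ω]
    (P : Measure Ω) [IsProbabilityMeasure P] (hG : G ≤ mΩ)
    {n : ℕ} (V : Ω → (Fin n → ℝ)) (hV : Measurable V)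
    (κ : Ω → Measure (Fin n → ℝ)) (hκmeas : Measurable[G] κ)
    (hκprob : ∀ ω, IsProbabilityMeasure (κ ω))
    (hκcond : ∀ g : (Fin n → ℝ) → ℝ, Measurable g → (∃ C : ℝ, ∀ y, |g y| ≤ C) →
      (fun ω => ∫ y, g y ∂(κ ω)) =ᵐ[P] P[(fun ω => g (V ω)) | G])
    (F : Measure (Fin n → ℝ)) [IsProbabilityMeasure F]
    (L : Ω → (Fin n → ℝ) → ℝ)
    (hLmeas : Measurable[G.prod inferInstance] (fun p : Ω × (Fin n → ℝ) => L p.1 p.2))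
    (hLnonneg : ∀ ω y, 0 ≤ L ω y)
    (hLdens : ∀ᵐ ω ∂P, (κ ω).withDensity (fun y => ENNReal.ofReal (L ω y)) = F)
    (hLpos : ∀ᵐ ω ∂P, κ ω {y | L ω y = 0} = 0)
    (Z : Ω → ℝ) (hZ : ∀ ω, Z ω = L ω (V ω))
    (P' : Measure Ω) (hP' : P' = P.withDensity (fun ω => ENNReal.ofReal (Z ω))) :
    (∀ᵐ ω ∂P, 0 < Z ω)
    ∧ (P'[(fun ω => (Z ω)⁻¹) | G] =ᵐ[P'] fun _ => (1 : ℝ))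
    ∧ (∀ W : Ω → ℝ, Measurable[G] W → (∃ C : ℝ, ∀ ω, |W ω| ≤ C) →
        ∫ ω, W ω * ((Z ω)⁻¹ - 1) ∂P' = 0) := by
  let κ' : Kernel[G] Ω (Fin n → ℝ) := @Kernel.mk Ω _ G _ κ hκmeas
  have : IsMarkovKernel κ' := ⟨hκprob⟩
  have hκ' : IsCondDistrib κ' V P := isCondDistrib_of_ae_eq_condExp hG hV fun B hB =>
    (Filter.EventuallyEq.of_eq (funext fun ω => (integral_indicator_one hB).symm)).trans
      (hκcond _ (measurable_one.indicator hB)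
        ⟨1, fun y => by by_cases hy : y ∈ B <;> simp [hy]⟩)
  obtain rfl : Z = fun ω => L ω (V ω) := funext hZ
  have hZmeas : Measurable fun ω => L ω (V ω) := hLmeas.comp ((measurable_id'' hG).prodMk hV)
  have hmass : ∀ A, MeasurableSet[G] A → ∫⁻ ω in A, ENNReal.ofReal (L ω (V ω)) ∂P = P A :=
    fun A hA => setLIntegral_comp_prodMk_eq_measure (ℓ := fun ω y => ENNReal.ofReal (L ω y))
      hG hV hκ' hLmeas.ennreal_ofReal
      (hLdens.mono fun ω h => by
        rw [← setLIntegral_univ, ← withDensity_apply _ .univ, show κ' ω = κ ω from rfl, h,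
          measure_univ]) hA
  have hpos : ∀ᵐ ω ∂P, 0 < L ω (V ω) :=
    (ae_prodMk_notMem hG hV hκ' (hLmeas (measurableSet_singleton 0)) hLpos).mono
      fun ω h => (hLnonneg ω (V ω)).lt_of_ne' h
  have hcond := condExp_inv_withDensity_ofReal_ae_eq_one hG hZmeas hpos hmass
  have hint := integrable_inv_withDensity_ofReal hZmeas hpos
  have : IsFiniteMeasure P' := ⟨by
    rw [hP', withDensity_apply _ .univ, hmass _ .univ]; exact measure_lt_top _ _⟩
  subst hP'
  refine ⟨hpos, hcond, fun W hW hW_bdd =>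
    integral_mul_eq_zero_of_condExp_ae_eq_zero hG hW.stronglyMeasurable hW_bdd
      (hint.sub (integrable_const 1)) ?_⟩
  filter_upwards [condExp_sub hint (integrable_const (1 : ℝ)) G, hcond] with ω h₁ h₂
  refine h₁.trans ?_
  simp [h₂, condExp_const hG]
end

section
/- Let X, ξ, η be independent real random variables on a probability space with laws gaussianReal m P, gaussianReal 0 Q and gaussianReal 0 R respectively, where m ∈ ℝ, P, Q ≥ 0, R > 0, and let a ∈ ℝ. Set X̂ := X + ξ, Y := a·X̂ + η, P̂ := P + Q, S := a²·P̂ + R and K := P̂·a / S. Then the conditional distribution of X̂ given Y satisfies: for (law of Y)-almost every y ∈ ℝ, condDistrib X̂ Y P evaluated at y equals the Gaussian measure gaussianReal (m + K·(y − a·m)) (P̂ − K·a·P̂). -/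
/-!
Write `X̂ = Z + K Y` with `Z := X̂ - K Y`. The pair `(Y, Z)` is a linear image of the independent
Gaussian pair `(X̂, η)`, hence jointly Gaussian, and the Kalman gain `K` is exactly the coefficient
making `cov(Y, Z) = 0`. So `Z` is independent of `Y`, and given `Y = y` the variable `X̂` is
distributed as `Z + K y`: a Gaussian with mean `m - K a m + K y` and variance
`(1 - K a)² P̂ + K² R = P̂ - K a P̂`.
-/

open MeasureTheory ProbabilityTheory Function

namespace MeasureTheory.Measure

variable {β γ δ : Type*} [MeasurableSpace β] [MeasurableSpace γ] [MeasurableSpace δ]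

lemma map_prod_eq_compProd {ν : Measure β} {ρ : Measure γ} [SFinite ν] [SFinite ρ]
    {g : β → γ → δ} (hg : Measurable (uncurry g)) (κ : Kernel β δ) [IsSFiniteKernel κ]
    (hκ : ∀ y, κ y = ρ.map (g y)) :
    (ν.prod ρ).map (fun p ↦ (p.1, g p.1 p.2)) = ν ⊗ₘ κ := by
  ext s hs
  have hgraph : Measurable fun p : β × γ ↦ (p.1, g p.1 p.2) := measurable_fst.prodMk hg
  rw [map_apply hgraph hs, prod_apply (hgraph hs), compProd_apply hs]
  refine lintegral_congr fun y ↦ ?_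
  have hgy : Measurable (g y) := hg.comp measurable_prodMk_left
  rw [hκ, map_apply hgy (measurable_prodMk_left hs)]
  rfl

end MeasureTheory.Measure

namespace ProbabilityTheory

section CondDistrib

variable {Ω β γ δ : Type*} [MeasurableSpace Ω] [MeasurableSpace β] [MeasurableSpace γ]
  [MeasurableSpace δ] [StandardBorelSpace δ] [Nonempty δ] {μ : Measure Ω} [IsFiniteMeasure μ]

lemma condDistrib_apply_ae_eq_map_of_indepFun {Y : Ω → β} {Z : Ω → γ} (hY : Measurable Y)
    (hZ : Measurable Z) (hYZ : IndepFun Y Z μ) {g : β → γ → δ} (hg : Measurable (uncurry g)) :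
    ∀ᵐ y ∂μ.map Y, condDistrib (fun ω ↦ g (Y ω) (Z ω)) Y μ y = (μ.map Z).map (g y) := by
  let κ : Kernel β δ :=
    (Kernel.deterministic id measurable_id ×ₖ Kernel.const β (μ.map Z)).map (uncurry g)
  have hκ : ∀ y, κ y = (μ.map Z).map (g y) := fun y ↦ by
    rw [Kernel.map_apply _ hg, Kernel.prod_apply, Kernel.deterministic_apply, Kernel.const_apply,
      id, Measure.dirac_prod, Measure.map_map hg measurable_prodMk_left]
    rfl
  have hgYZ : Measurable fun ω ↦ g (Y ω) (Z ω) := hg.comp (hY.prodMk hZ)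
  have hgraph : Measurable fun p : β × γ ↦ (p.1, g p.1 p.2) := measurable_fst.prodMk hg
  have hjoint : μ.map (fun ω ↦ (Y ω, g (Y ω) (Z ω))) = μ.map Y ⊗ₘ κ := by
    rw [← Measure.map_prod_eq_compProd hg κ hκ,
      ← (indepFun_iff_map_prod_eq_prod_map_map hY.aemeasurable hZ.aemeasurable).1 hYZ,
      Measure.map_map hgraph (hY.prodMk hZ)]
    rfl
  filter_upwards [condDistrib_ae_eq_of_measure_eq_compProd Y hgYZ.aemeasurable hjoint] with y hy
  rw [hy, hκ]

end CondDistrib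

section LinearCombination

open scoped NNReal

variable {Ω : Type*} [MeasurableSpace Ω] {μ : Measure Ω} {U V : Ω → ℝ} {m₁ m₂ : ℝ}
  {v₁ v₂ : ℝ≥0}

lemma gaussianReal_const_mul_add_const_mul (hU : HasLaw U (gaussianReal m₁ v₁) μ)
    (hV : HasLaw V (gaussianReal m₂ v₂) μ) (hUV : IndepFun U V μ) (α β : ℝ) :
    HasLaw (fun ω ↦ α * U ω + β * V ω)
      (gaussianReal (α * m₁ + β * m₂) (α ^ 2 * v₁ + β ^ 2 * v₂ : ℝ).toNNReal) μ := by
  have hvar : (α ^ 2 * v₁ + β ^ 2 * v₂ : ℝ).toNNReal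
      = .mk (α ^ 2) (sq_nonneg _) * v₁ + .mk (β ^ 2) (sq_nonneg _) * v₂ := by
    ext
    rw [Real.coe_toNNReal _ (by positivity)]
    rfl
  rw [hvar, ← gaussianReal_conv_gaussianReal]
  exact (hUV.comp (measurable_const_mul α) (measurable_const_mul β)).hasLaw_fun_add
    (gaussianReal_const_mul hU α) (gaussianReal_const_mul hV β)

lemma indepFun_const_mul_add_const_mul_of_gaussianReal [IsProbabilityMeasure μ]
    (hU : HasLaw U (gaussianReal m₁ v₁) μ) (hV : HasLaw V (gaussianReal m₂ v₂) μ)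
    (hUV : IndepFun U V μ) {α β γ δ : ℝ} (h : α * γ * v₁ + β * δ * v₂ = 0) :
    IndepFun (fun ω ↦ α * U ω + β * V ω) (fun ω ↦ γ * U ω + δ * V ω) μ := by
  have hUg := hU.hasGaussianLaw
  have hVg := hV.hasGaussianLaw
  let L : ℝ × ℝ →L[ℝ] ℝ × ℝ :=
    (α • ContinuousLinearMap.fst ℝ ℝ ℝ + β • ContinuousLinearMap.snd ℝ ℝ ℝ).prod
      (γ • ContinuousLinearMap.fst ℝ ℝ ℝ + δ • ContinuousLinearMap.snd ℝ ℝ ℝ)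
  have hjoint : HasGaussianLaw (fun ω ↦ (α * U ω + β * V ω, γ * U ω + δ * V ω)) μ := by
    simpa [L] using (hUV.hasGaussianLaw hUg hVg).map_fun L
  refine hjoint.indepFun_of_covariance_eq_zero ?_
  have hU2 := hUg.memLp_two
  have hV2 := hVg.memLp_two
  change cov[(fun ω ↦ α * U ω) + (fun ω ↦ β * V ω), (fun ω ↦ γ * U ω) + (fun ω ↦ δ * V ω); μ] = 0
  rw [covariance_add_left (hU2.const_mul α) (hV2.const_mul β)
      ((hU2.const_mul γ).add (hV2.const_mul δ)),
    covariance_add_right (hU2.const_mul α) (hU2.const_mul γ) (hV2.const_mul δ),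
    covariance_add_right (hV2.const_mul β) (hU2.const_mul γ) (hV2.const_mul δ)]
  simp only [covariance_const_mul_left, covariance_const_mul_right, covariance_comm V U,
    hUV.covariance_eq_zero hU2 hV2, covariance_self hU.aemeasurable,
    covariance_self hV.aemeasurable, hU.variance_eq, hV.variance_eq, variance_id_gaussianReal]
  linear_combination h

end LinearCombination

theorem condDistrib_ae_eq_gaussianReal_of_linear_observation {Ω : Type*} [MeasurableSpace Ω]
    {μ : Measure Ω} [IsProbabilityMeasure μ] {U η : Ω → ℝ} (hUm : Measurable U)
    (hηm : Measurable η) {m v r : ℝ} (hv : 0 ≤ v) (hr : 0 < r)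
    (hU : HasLaw U (gaussianReal m v.toNNReal) μ) (hη : HasLaw η (gaussianReal 0 r.toNNReal) μ)
    (hUη : IndepFun U η μ) (a : ℝ) :
    ∀ᵐ y ∂μ.map (fun ω ↦ a * U ω + η ω),
      condDistrib U (fun ω ↦ a * U ω + η ω) μ y
        = gaussianReal (m + v * a / (a ^ 2 * v + r) * (y - a * m))
            (v - v * a / (a ^ 2 * v + r) * a * v).toNNReal := by
  set K := v * a / (a ^ 2 * v + r) with hK
  have hS : a ^ 2 * v + r ≠ 0 := by positivity
  have hcov : a * (1 - K * a) * v + 1 * -K * r = 0 := by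
    rw [hK]
    field_simp
    ring
  have hvar : (1 - K * a) ^ 2 * v + (-K) ^ 2 * r = v - K * a * v := by
    rw [hK]
    field_simp
    ring
  rw [← Real.coe_toNNReal _ hv, ← Real.coe_toNNReal _ hr.le] at hcov
  have hYZ : IndepFun (fun ω ↦ a * U ω + η ω) (fun ω ↦ (1 - K * a) * U ω + -K * η ω) μ := by
    simpa only [one_mul] using indepFun_const_mul_add_const_mul_of_gaussianReal hU hη hUη hcov
  have hZ := gaussianReal_const_mul_add_const_mul hU hη hUη (1 - K * a) (-K)
  have hdecomp : U = fun ω ↦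
      (fun y z ↦ z + K * y) (a * U ω + η ω) ((1 - K * a) * U ω + -K * η ω) := by
    funext ω
    ring
  have hcond := condDistrib_apply_ae_eq_map_of_indepFun (by fun_prop) (by fun_prop) hYZ
    (g := fun y z ↦ z + K * y) (by fun_prop)
  rw [← hdecomp] at hcond
  filter_upwards [hcond] with y hy
  rw [hy, hZ.map_eq, gaussianReal_map_add_const, Real.coe_toNNReal _ hv,
    Real.coe_toNNReal _ hr.le, hvar]
  congr 1
  ring

end ProbabilityTheory

/-- Bayesian update of the Kalman filter with predictable jumps: if `X ~ N(m,p)`,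
`ξ ~ N(0,q)` and `η ~ N(0,r)` are independent, `X̂ = X + ξ`, `Y = a X̂ + η`, `p̂ = p + q`,
`S = a² p̂ + r` and `K = p̂ a / S`, then the conditional distribution of `X̂` given `Y = y` is
`N(m + K(y − a m), p̂ − K a p̂)` for `(law of Y)`-a.e. `y`. -/
theorem stmt9 {Ω : Type*} [MeasurableSpace Ω] (μ : Measure Ω) [IsProbabilityMeasure μ]
    (X ξ η : Ω → ℝ) (hX : Measurable X) (hξ : Measurable ξ) (hη : Measurable η)
    (m p q r : ℝ) (hp : 0 ≤ p) (hq : 0 ≤ q) (hr : 0 < r) (a : ℝ)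
    (hlawX : μ.map X = gaussianReal m p.toNNReal)
    (hlawξ : μ.map ξ = gaussianReal 0 q.toNNReal)
    (hlawη : μ.map η = gaussianReal 0 r.toNNReal)
    (hindep : iIndepFun ![X, ξ, η] μ) :
    ∀ᵐ y ∂(μ.map (fun ω => a * (X ω + ξ ω) + η ω)),
      condDistrib (fun ω => X ω + ξ ω) (fun ω => a * (X ω + ξ ω) + η ω) μ y
        = gaussianReal
            (m + ((p + q) * a / (a ^ 2 * (p + q) + r)) * (y - a * m))
            ((p + q) - ((p + q) * a / (a ^ 2 * (p + q) + r)) * a * (p + q)).toNNReal := by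
  have hXξ : IndepFun X ξ μ := by simpa using hindep.indepFun (i := 0) (j := 1) (by decide)
  have hXhat : HasLaw (fun ω ↦ X ω + ξ ω) (gaussianReal m (p + q).toNNReal) μ := by
    simpa [Real.toNNReal_add hp hq, gaussianReal_conv_gaussianReal] using
      hXξ.hasLaw_fun_add ⟨hX.aemeasurable, hlawX⟩ ⟨hξ.aemeasurable, hlawξ⟩
  have hXhatη : IndepFun (fun ω ↦ X ω + ξ ω) η μ := by
    have hmeas : ∀ i, Measurable (![X, ξ, η] i) := fun i ↦ by fin_cases i <;> assumption
    exact (hindep.indepFun_prodMk hmeas 0 1 2 (by decide) (by decide)).comp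
      (measurable_fst.add measurable_snd) measurable_id
  exact condDistrib_ae_eq_gaussianReal_of_linear_observation (hX.add hξ) hη (add_nonneg hp hq) hr
    hXhat ⟨hη.aemeasurable, hlawη⟩ hXhatη a
end

section
/- Let X, ξ, η be independent real random variables with laws gaussianReal m P, gaussianReal 0 Q and gaussianReal 0 R respectively, where m ∈ ℝ, P, Q ≥ 0, R > 0, and let a ∈ ℝ. Set X̂ := X + ξ, Y := a·X̂ + η, P̂ := P + Q, S := a²·P̂ + R and K := P̂·a / S. Then the conditional expectation of X̂ given the σ-algebra generated by Y satisfies E[X̂ | σ(Y)] = m + K·(Y − a·m) almost surely. -/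
/-!
With `K = cov[X̂, Y] / Var[Y]`, the residual `X̂ - K Y` is uncorrelated with `Y`. Since
`(X̂ - K Y, Y)` is a linear image of the jointly Gaussian pair `(X̂, η)`, being uncorrelated
means being independent, so `E[X̂ - K Y | σ(Y)]` is the constant `E[X̂] - K E[Y]` and
`E[X̂ | σ(Y)] = E[X̂] + K (Y - E[Y])`. For `Y = a X̂ + η` one has `cov[X̂, Y] = a Var[X̂]` and
`Var[Y] = a² Var[X̂] + Var[η]`.
-/

open MeasureTheory ProbabilityTheory Filter

section

variable {Ω : Type*} {mΩ : MeasurableSpace Ω} {P : Measure Ω}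

lemma condExp_comap_ae_eq_of_hasGaussianLaw {G Y : Ω → ℝ} (hG : Measurable G)
    (hY : Measurable Y) (hGY : HasGaussianLaw (fun ω ↦ (G ω, Y ω)) P) (hvar : Var[Y; P] ≠ 0) :
    P[G | MeasurableSpace.comap Y (borel ℝ)]
      =ᵐ[P] fun ω ↦ P[G] + cov[G, Y; P] / Var[Y; P] * (Y ω - P[Y]) := by
  have := hGY.isProbabilityMeasure
  rw [← BorelSpace.measurable_eq]
  set K := cov[G, Y; P] / Var[Y; P]
  set Z := fun ω ↦ G ω - K * Y ω
  have hZ : Measurable Z := hG.sub (hY.const_mul K)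
  have hG2 : MemLp G 2 P := hGY.fst.memLp_two
  have hY2 : MemLp Y 2 P := hGY.snd.memLp_two
  have hZY : HasGaussianLaw (fun ω ↦ (Z ω, Y ω)) P :=
    hGY.map_fun (((ContinuousLinearMap.fst ℝ ℝ ℝ) - K • ContinuousLinearMap.snd ℝ ℝ ℝ).prod
      (ContinuousLinearMap.snd ℝ ℝ ℝ))
  have hcov : cov[Z, Y; P] = 0 := by
    rw [covariance_fun_sub_left hG2 (hY2.const_mul K) hY2, covariance_const_mul_left,
      covariance_self hY.aemeasurable, div_mul_cancel₀ _ hvar, sub_self]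
  have hcondZ : P[Z | MeasurableSpace.comap Y inferInstance] =ᵐ[P] fun _ ↦ P[Z] :=
    condExp_indep_eq hZ.comap_le hY.comap_le (Measurable.of_comap_le le_rfl).stronglyMeasurable
      ((IndepFun_iff_Indep _ _ _).1 (hZY.indepFun_of_covariance_eq_zero hcov))
  have hcondY : P[Y | MeasurableSpace.comap Y inferInstance] = Y :=
    condExp_of_stronglyMeasurable hY.comap_le (Measurable.of_comap_le le_rfl).stronglyMeasurable
      hGY.snd.integrable
  have hmeanZ : P[Z] = P[G] - K * P[Y] := by
    rw [integral_sub hGY.fst.integrable (hGY.snd.integrable.const_mul K), integral_const_mul]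
  have hGZ : G = Z + K • Y := by ext ω; simp [Z]
  calc P[G | MeasurableSpace.comap Y inferInstance]
      =ᵐ[P] P[Z | MeasurableSpace.comap Y inferInstance]
        + K • P[Y | MeasurableSpace.comap Y inferInstance] := by
        rw [hGZ]
        exact (condExp_add hZY.fst.integrable (hGY.snd.integrable.smul K) _).trans
          (EventuallyEq.rfl.add (condExp_smul K Y _))
    _ =ᵐ[P] fun ω ↦ P[G] + K * (Y ω - P[Y]) := by
        filter_upwards [hcondZ] with ω hω
        simp only [Pi.add_apply, Pi.smul_apply, smul_eq_mul, hω, hcondY, hmeanZ]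
        ring

lemma condExp_comap_const_mul_add_ae_eq {G η : Ω → ℝ} (hG : Measurable G) (hη : Measurable η)
    (hGlaw : HasGaussianLaw G P) (hηlaw : HasGaussianLaw η P) (hind : IndepFun G η P) (a : ℝ)
    (hS : a ^ 2 * Var[G; P] + Var[η; P] ≠ 0) :
    P[G | MeasurableSpace.comap (fun ω ↦ a * G ω + η ω) (borel ℝ)]
      =ᵐ[P] fun ω ↦ P[G] + Var[G; P] * a / (a ^ 2 * Var[G; P] + Var[η; P])
        * (a * G ω + η ω - (a * P[G] + P[η])) := by
  have := hGlaw.isProbabilityMeasure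
  have hGY : HasGaussianLaw (fun ω ↦ (G ω, a * G ω + η ω)) P :=
    (hind.hasGaussianLaw hGlaw hηlaw).map_fun ((ContinuousLinearMap.fst ℝ ℝ ℝ).prod
      (a • ContinuousLinearMap.fst ℝ ℝ ℝ + ContinuousLinearMap.snd ℝ ℝ ℝ))
  have hvar : Var[fun ω ↦ a * G ω + η ω; P] = a ^ 2 * Var[G; P] + Var[η; P] := by
    rw [IndepFun.variance_fun_add (hGlaw.memLp_two.const_mul a) hηlaw.memLp_two
      (hind.comp (measurable_const_mul a) measurable_id), variance_const_mul]
  have hcov : cov[G, fun ω ↦ a * G ω + η ω; P] = Var[G; P] * a := by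
    rw [show (fun ω ↦ a * G ω + η ω) = (fun ω ↦ a * G ω) + η from rfl,
      covariance_add_right hGlaw.memLp_two (hGlaw.memLp_two.const_mul a) hηlaw.memLp_two,
      covariance_const_mul_right, covariance_self hG.aemeasurable,
      hind.covariance_eq_zero hGlaw.memLp_two hηlaw.memLp_two]
    ring
  have hmean : P[fun ω ↦ a * G ω + η ω] = a * P[G] + P[η] := by
    rw [integral_add (hGlaw.integrable.const_mul a) hηlaw.integrable, integral_const_mul]
  have := condExp_comap_ae_eq_of_hasGaussianLaw (Y := fun ω ↦ a * G ω + η ω) hG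
    ((hG.const_mul a).add hη) hGY (hvar ▸ hS)
  rwa [hvar, hcov, hmean] at this

end

/-- Conditional-mean update of the Kalman filter with predictable jumps: with `X ~ N(m,p)`,
`ξ ~ N(0,q)`, `η ~ N(0,r)` independent, `X̂ = X + ξ`, `Y = a X̂ + η`, `p̂ = p + q`,
`S = a² p̂ + r`, `K = p̂ a / S`, one has `E[X̂ | σ(Y)] = m + K (Y − a m)` a.s. -/
theorem stmt10 {Ω : Type*} [MeasurableSpace Ω] (μ : Measure Ω) [IsProbabilityMeasure μ]
    (X ξ η : Ω → ℝ) (hX : Measurable X) (hξ : Measurable ξ) (hη : Measurable η)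
    (m p q r : ℝ) (hp : 0 ≤ p) (hq : 0 ≤ q) (hr : 0 < r) (a : ℝ)
    (hlawX : μ.map X = gaussianReal m p.toNNReal)
    (hlawξ : μ.map ξ = gaussianReal 0 q.toNNReal)
    (hlawη : μ.map η = gaussianReal 0 r.toNNReal)
    (hindep : iIndepFun ![X, ξ, η] μ) :
    μ[(fun ω => X ω + ξ ω) |
        MeasurableSpace.comap (fun ω => a * (X ω + ξ ω) + η ω) (borel ℝ)]
      =ᵐ[μ] fun ω => m + ((p + q) * a / (a ^ 2 * (p + q) + r))
        * ((a * (X ω + ξ ω) + η ω) - a * m) := by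
  have hmeas : ∀ i, Measurable (![X, ξ, η] i) := by
    intro i; fin_cases i <;> assumption
  have hGη : IndepFun (fun ω ↦ X ω + ξ ω) η μ :=
    hindep.indepFun_add_left hmeas 0 1 2 (by decide) (by decide)
  have hGlaw : HasLaw (fun ω ↦ X ω + ξ ω) (gaussianReal (m + 0) (p.toNNReal + q.toNNReal)) μ :=
    ⟨(hX.add hξ).aemeasurable, gaussianReal_add_gaussianReal_of_indepFun
      (hindep.indepFun (show (0 : Fin 3) ≠ 1 by decide)) hlawX hlawξ⟩
  have hηlaw : HasLaw η (gaussianReal 0 r.toNNReal) μ := ⟨hη.aemeasurable, hlawη⟩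
  have hmeanG : μ[fun ω ↦ X ω + ξ ω] = m := by
    rw [hGlaw.integral_eq, integral_id_gaussianReal, add_zero]
  have hvarG : Var[fun ω ↦ X ω + ξ ω; μ] = p + q := by simp [hGlaw.variance_eq, hp, hq]
  have hmeanη : μ[η] = 0 := by simp [hηlaw.integral_eq]
  have hvarη : Var[η; μ] = r := by simp [hηlaw.variance_eq, hr.le]
  have := condExp_comap_const_mul_add_ae_eq (G := fun ω ↦ X ω + ξ ω) (hX.add hξ) hη
    hGlaw.hasGaussianLaw hηlaw.hasGaussianLaw hGη a (by rw [hvarG, hvarη]; positivity)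
  simpa [hmeanG, hvarG, hmeanη, hvarη] using this
end

section
/- Let X, ξ, η be independent real random variables with laws gaussianReal m P, gaussianReal 0 Q and gaussianReal 0 R respectively, where m ∈ ℝ, P, Q ≥ 0, R > 0, and let a ∈ ℝ. Set X̂ := X + ξ, Y := a·X̂ + η, P̂ := P + Q, S := a²·P̂ + R and K := P̂·a / S. Then E[(X̂ − (m + K·(Y − a·m)))²] = P̂ − K·a·P̂, and this quantity equals P̂·R/S. -/
/-!
Writing `U = X + ξ` for the jump-inflated state, the estimation error is
`(1 - K a) (U - m) - K η`, a linear combination of the independent centred variables `U - m`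
and `η`. Its mean square is therefore its variance `(1 - K a)² P̂ + K² R`, and for the Kalman
gain `K = P̂ a / S` this collapses to `P̂ - K a P̂ = P̂ R / S`. Only the first two moments of
the Gaussian laws enter.
-/

open MeasureTheory ProbabilityTheory
open scoped NNReal ENNReal

namespace ProbabilityTheory

variable {Ω : Type*} [MeasurableSpace Ω] {μ : Measure Ω}

lemma hasLaw_of_map_eq {X : Ω → ℝ} {ν : Measure ℝ} [IsProbabilityMeasure ν]
    (h : μ.map X = ν) : HasLaw X ν μ where
  aemeasurable := .of_map_ne_zero (h ▸ IsProbabilityMeasure.ne_zero ν)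
  map_eq := h

lemma HasLaw.memLp_of_gaussianReal {X : Ω → ℝ} {m : ℝ} {v : ℝ≥0}
    (hX : HasLaw X (gaussianReal m v) μ) {p : ℝ≥0∞} (hp : p ≠ ∞) : MemLp X p μ := by
  have h := memLp_id_gaussianReal' (μ := m) (v := v) p hp
  rwa [← hX.map_eq, memLp_map_measure_iff (hX.map_eq ▸ aestronglyMeasurable_id)
    hX.aemeasurable] at h

lemma HasLaw.integral_eq_of_gaussianReal {X : Ω → ℝ} {m : ℝ} {v : ℝ≥0}
    (hX : HasLaw X (gaussianReal m v) μ) : μ[X] = m :=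
  hX.integral_eq.trans integral_id_gaussianReal

lemma HasLaw.variance_eq_of_gaussianReal {X : Ω → ℝ} {m : ℝ} {v : ℝ≥0}
    (hX : HasLaw X (gaussianReal m v) μ) : Var[X; μ] = v :=
  hX.variance_eq.trans variance_id_gaussianReal

lemma IndepFun.variance_const_mul_add_const_mul {U V : Ω → ℝ} (h : U ⟂ᵢ[μ] V)
    (hU : MemLp U 2 μ) (hV : MemLp V 2 μ) (c d : ℝ) :
    Var[fun ω ↦ c * U ω + d * V ω; μ] = c ^ 2 * Var[U; μ] + d ^ 2 * Var[V; μ] := by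
  have h' : (fun ω ↦ c * U ω) ⟂ᵢ[μ] (fun ω ↦ d * V ω) :=
    h.comp (measurable_const_mul c) (measurable_const_mul d)
  rw [h'.variance_fun_add (hU.const_mul c) (hV.const_mul d), variance_const_mul,
    variance_const_mul]

lemma integral_sq_sub_linearUpdate [IsProbabilityMeasure μ] {U η : Ω → ℝ}
    (hU : MemLp U 2 μ) (hη : MemLp η 2 μ) (hUη : U ⟂ᵢ[μ] η) (hη₀ : μ[η] = 0) (a K : ℝ) :
    ∫ ω, (U ω - (μ[U] + K * ((a * U ω + η ω) - a * μ[U]))) ^ 2 ∂μ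
      = (1 - K * a) ^ 2 * Var[U; μ] + K ^ 2 * Var[η; μ] := by
  set e : Ω → ℝ := fun ω ↦ (1 - K * a) * U ω + (-K) * η ω with he
  have he_mean : μ[e] = (1 - K * a) * μ[U] := by
    rw [he, integral_add ((hU.integrable one_le_two).const_mul _)
      ((hη.integrable one_le_two).const_mul _), integral_const_mul, integral_const_mul, hη₀,
      mul_zero, add_zero]
  calc ∫ ω, (U ω - (μ[U] + K * ((a * U ω + η ω) - a * μ[U]))) ^ 2 ∂μ
      = ∫ ω, (e ω - μ[e]) ^ 2 ∂μ := by
        congr 1; funext ω; rw [he_mean, he]; ring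
    _ = Var[e; μ] := by
        have he_meas : AEMeasurable e μ :=
          (hU.aemeasurable.const_mul _).add (hη.aemeasurable.const_mul _)
        exact (variance_eq_integral he_meas).symm
    _ = (1 - K * a) ^ 2 * Var[U; μ] + K ^ 2 * Var[η; μ] := by
        rw [he, hUη.variance_const_mul_add_const_mul hU hη, neg_sq]

end ProbabilityTheory

section KalmanGain

variable {P R a : ℝ}

lemma one_sub_gain_sq_mul_add_gain_sq_mul :
    (1 - P * a / (a ^ 2 * P + R) * a) ^ 2 * P + (P * a / (a ^ 2 * P + R)) ^ 2 * R
      = P - P * a / (a ^ 2 * P + R) * a * P := by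
  rcases eq_or_ne (a ^ 2 * P + R) 0 with hS | hS
  · simp [hS] -- the gain is `0` here, as `x / 0 = 0`
  · linear_combination (P * a / (a ^ 2 * P + R)) * div_mul_cancel₀ (P * a) hS

lemma sub_gain_mul_mul_eq_div (hS : a ^ 2 * P + R ≠ 0) :
    P - P * a / (a ^ 2 * P + R) * a * P = P * R / (a ^ 2 * P + R) := by
  rw [eq_div_iff hS]
  linear_combination (-(a * P)) * div_mul_cancel₀ (P * a) hS

end KalmanGain

theorem stmt11_general {Ω : Type*} [MeasurableSpace Ω] (μ : Measure Ω) [IsProbabilityMeasure μ]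
    (X ξ η : Ω → ℝ)
    (m p q r : ℝ) (hp : 0 ≤ p) (hq : 0 ≤ q) (hr : 0 < r) (a : ℝ)
    (hlawX : μ.map X = gaussianReal m p.toNNReal)
    (hlawξ : μ.map ξ = gaussianReal 0 q.toNNReal)
    (hlawη : μ.map η = gaussianReal 0 r.toNNReal)
    (hindep : iIndepFun ![X, ξ, η] μ) :
    (∫ ω, ((X ω + ξ ω) - (m + ((p + q) * a / (a ^ 2 * (p + q) + r))
        * ((a * (X ω + ξ ω) + η ω) - a * m))) ^ 2 ∂μ
      = (p + q) - ((p + q) * a / (a ^ 2 * (p + q) + r)) * a * (p + q))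
    ∧ ((p + q) - ((p + q) * a / (a ^ 2 * (p + q) + r)) * a * (p + q)
      = (p + q) * r / (a ^ 2 * (p + q) + r)) := by
  have lawX := hasLaw_of_map_eq hlawX
  have lawξ := hasLaw_of_map_eq hlawξ
  have lawη := hasLaw_of_map_eq hlawη
  have hX := lawX.memLp_of_gaussianReal (p := 2) ENNReal.ofNat_ne_top
  have hξ := lawξ.memLp_of_gaussianReal (p := 2) ENNReal.ofNat_ne_top
  have hη := lawη.memLp_of_gaussianReal (p := 2) ENNReal.ofNat_ne_top
  have hmeas : ∀ i, AEMeasurable (![X, ξ, η] i) μ := by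
    intro i; fin_cases i
    exacts [lawX.aemeasurable, lawξ.aemeasurable, lawη.aemeasurable]
  have hXξ : X ⟂ᵢ[μ] ξ := hindep.indepFun (i := 0) (j := 1) (by decide)
  have hXξη : (X + ξ) ⟂ᵢ[μ] η := hindep.indepFun_add_left₀ hmeas 0 1 2 (by decide) (by decide)
  have hmean : μ[X + ξ] = m := by
    rw [Pi.add_def, integral_add (hX.integrable one_le_two) (hξ.integrable one_le_two),
      lawX.integral_eq_of_gaussianReal, lawξ.integral_eq_of_gaussianReal, add_zero]
  have hvar : Var[X + ξ; μ] = p + q := by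
    rw [hXξ.variance_add hX hξ, lawX.variance_eq_of_gaussianReal,
      lawξ.variance_eq_of_gaussianReal, Real.coe_toNNReal p hp, Real.coe_toNNReal q hq]
  have hηvar : Var[η; μ] = r := by
    rw [lawη.variance_eq_of_gaussianReal, Real.coe_toNNReal r hr.le]
  have hmse := integral_sq_sub_linearUpdate (hX.add hξ) hη hXξη lawη.integral_eq_of_gaussianReal a
    ((p + q) * a / (a ^ 2 * (p + q) + r))
  rw [hmean, hvar, hηvar, one_sub_gain_sq_mul_add_gain_sq_mul] at hmse
  exact ⟨hmse, sub_gain_mul_mul_eq_div (by positivity)⟩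

/-- Posterior-variance update of the Kalman filter with predictable jumps: with `X ~ N(m,p)`,
`ξ ~ N(0,q)`, `η ~ N(0,r)` independent, `X̂ = X + ξ`, `Y = a X̂ + η`, `p̂ = p + q`,
`S = a² p̂ + r`, `K = p̂ a / S`, the mean squared error of the posterior mean satisfies
`E[(X̂ − (m + K(Y − a m)))²] = p̂ − K a p̂ = p̂ r / S`. -/
theorem stmt11 {Ω : Type*} [MeasurableSpace Ω] (μ : Measure Ω) [IsProbabilityMeasure μ]
    (X ξ η : Ω → ℝ) (hX : Measurable X) (hξ : Measurable ξ) (hη : Measurable η)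
    (m p q r : ℝ) (hp : 0 ≤ p) (hq : 0 ≤ q) (hr : 0 < r) (a : ℝ)
    (hlawX : μ.map X = gaussianReal m p.toNNReal)
    (hlawξ : μ.map ξ = gaussianReal 0 q.toNNReal)
    (hlawη : μ.map η = gaussianReal 0 r.toNNReal)
    (hindep : iIndepFun ![X, ξ, η] μ) :
    (∫ ω, ((X ω + ξ ω) - (m + ((p + q) * a / (a ^ 2 * (p + q) + r))
        * ((a * (X ω + ξ ω) + η ω) - a * m))) ^ 2 ∂μ
      = (p + q) - ((p + q) * a / (a ^ 2 * (p + q) + r)) * a * (p + q))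
    ∧ ((p + q) - ((p + q) * a / (a ^ 2 * (p + q) + r)) * a * (p + q)
      = (p + q) * r / (a ^ 2 * (p + q) + r)) :=
  stmt11_general μ X ξ η m p q r hp hq hr a hlawX hlawξ hlawη hindep
end

section
/- Let (Ω, 𝓕, P) be a probability space, G ⊆ 𝓕 a sub-σ-algebra, and X₀ a square-integrable real random variable. Let m̂ be a version of E[X₀ | G] and let P̂ be a nonnegative G-measurable random variable with E[X₀² | G] − m̂² = P̂ almost surely. Let λ, σ > 0 and Δ ≥ 0, and let W be a real random variable with E[W] = 0 and E[W²] = (σ²/(2λ))·(1 − e^{−2λΔ}), such that σ(W) is independent of G ⊔ σ(X₀). Define X := e^{−λΔ}·X₀ + W. Then almost surely E[X | G] = e^{−λΔ}·m̂ and E[X² | G] − (e^{−λΔ}·m̂)² = (σ²/(2λ))·(1 − e^{−2λΔ}) + e^{−2λΔ}·P̂. -/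
/-!
Conditioning on `G ⊔ σ(X₀)` first, the noise `W` is independent of everything known, so it can be
replaced by its mean there; in particular the cross term `X₀ W` of `(e^{−λΔ} X₀ + W)²` averages out
to `E[W] · X₀`, which vanishes. What remains is `e^{−2λΔ} E[X₀² | G] + E[W²]`.
-/

open MeasureTheory ProbabilityTheory

section

variable {Ω : Type*} {m m' : MeasurableSpace Ω} [mΩ : MeasurableSpace Ω] {μ : Measure Ω}
  {X W : Ω → ℝ}

lemma condExp_const_mul (c : ℝ) (f : Ω → ℝ) :
    μ[fun ω => c * f ω | m] =ᵐ[μ] fun ω => c * μ[f | m] ω :=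
  condExp_smul c f m

lemma condExp_mul_eq_integral_mul_of_indep [IsProbabilityMeasure μ] (hmm' : m ≤ m')
    (hm' : m' ≤ mΩ) (hX : StronglyMeasurable[m'] X) (hW : Measurable W) (hXL2 : MemLp X 2 μ)
    (hWL2 : MemLp W 2 μ) (hind : Indep (MeasurableSpace.comap W inferInstance) m' μ) :
    μ[fun ω => X ω * W ω | m] =ᵐ[μ] fun ω => (∫ ω', W ω' ∂μ) * μ[X | m] ω := by
  have hWm' : μ[W | m'] =ᵐ[μ] fun _ => ∫ ω, W ω ∂μ :=
    condExp_indep_eq hW.comap_le hm' (comap_measurable W).stronglyMeasurable hind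
  have hXWm' : μ[X * W | m'] =ᵐ[μ] fun ω => (∫ ω', W ω' ∂μ) * X ω := by
    filter_upwards [condExp_mul_of_stronglyMeasurable_left hX (hXL2.integrable_mul hWL2)
      (hWL2.integrable one_le_two), hWm'] with ω h₁ h₂
    rw [h₁, Pi.mul_apply, h₂, mul_comm]
  calc μ[X * W | m] =ᵐ[μ] μ[μ[X * W | m'] | m] := (condExp_condExp_of_le hmm' hm').symm
    _ =ᵐ[μ] μ[fun ω => (∫ ω', W ω' ∂μ) * X ω | m] := condExp_congr_ae hXWm'
    _ =ᵐ[μ] fun ω => (∫ ω', W ω' ∂μ) * μ[X | m] ω := condExp_const_mul _ X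

lemma condExp_affine_of_indep [IsProbabilityMeasure μ] (hm : m ≤ mΩ) (hW : Measurable W)
    (hXi : Integrable X μ) (hWi : Integrable W μ)
    (hind : Indep (MeasurableSpace.comap W inferInstance) m μ) (a : ℝ) :
    μ[fun ω => a * X ω + W ω | m] =ᵐ[μ] fun ω => a * μ[X | m] ω + ∫ ω', W ω' ∂μ := by
  have hWm : μ[W | m] =ᵐ[μ] fun _ => ∫ ω, W ω ∂μ :=
    condExp_indep_eq hW.comap_le hm (comap_measurable W).stronglyMeasurable hind
  have hadd : μ[fun ω => a * X ω + W ω | m] =ᵐ[μ] μ[fun ω => a * X ω | m] + μ[W | m] :=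
    condExp_add (hXi.const_mul a) hWi m
  filter_upwards [hadd, condExp_const_mul a X, hWm] with ω h₁ h₂ h₃
  rw [h₁, Pi.add_apply, h₂, h₃]

lemma condExp_sq_affine_of_indep [IsProbabilityMeasure μ] (hm : m ≤ mΩ) (hX : Measurable X)
    (hW : Measurable W) (hXL2 : MemLp X 2 μ) (hWL2 : MemLp W 2 μ)
    (hind : Indep (MeasurableSpace.comap W inferInstance)
      (m ⊔ MeasurableSpace.comap X inferInstance) μ) (a : ℝ) :
    μ[fun ω => (a * X ω + W ω) ^ 2 | m] =ᵐ[μ] fun ω =>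
      a ^ 2 * μ[fun ω' => X ω' ^ 2 | m] ω + 2 * a * (∫ ω', W ω' ∂μ) * μ[X | m] ω
        + ∫ ω', W ω' ^ 2 ∂μ := by
  have hWsq : μ[fun ω => W ω ^ 2 | m] =ᵐ[μ] fun _ => ∫ ω, W ω ^ 2 ∂μ :=
    condExp_indep_eq hW.comap_le hm ((comap_measurable W).pow_const 2).stronglyMeasurable
      (indep_of_indep_of_le_right hind le_sup_left)
  have hXW : Integrable (fun ω => X ω * W ω) μ := hXL2.integrable_mul hWL2
  have hXm' : StronglyMeasurable[m ⊔ MeasurableSpace.comap X inferInstance] X :=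
    ((comap_measurable X).mono (le_sup_right (a := m)) le_rfl).stronglyMeasurable
  have hexpand : (fun ω => (a * X ω + W ω) ^ 2) = (fun ω => a ^ 2 * X ω ^ 2)
      + (fun ω => 2 * a * (X ω * W ω)) + fun ω => W ω ^ 2 := by
    funext ω; simp only [Pi.add_apply]; ring
  have hadd := (condExp_add ((hXL2.integrable_sq.const_mul (a ^ 2)).add
      (hXW.const_mul (2 * a))) hWL2.integrable_sq m).trans
    ((condExp_add (hXL2.integrable_sq.const_mul (a ^ 2)) (hXW.const_mul (2 * a)) m).add
      Filter.EventuallyEq.rfl)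
  rw [hexpand]
  filter_upwards [hadd, condExp_const_mul (a ^ 2) (fun ω => X ω ^ 2),
    condExp_const_mul (2 * a) (fun ω => X ω * W ω),
    condExp_mul_eq_integral_mul_of_indep le_sup_left (sup_le hm hX.comap_le)
      hXm' hW hXL2 hWL2 hind, hWsq]
    with ω h₁ h₂ h₃ h₄ h₅
  simp only [Pi.add_apply] at h₁
  rw [h₁, h₂, h₃, h₄, h₅]
  ring

end

theorem stmt12_general {Ω : Type*} (G : MeasurableSpace Ω) [mΩ : MeasurableSpace Ω]
    (P : Measure Ω) [IsProbabilityMeasure P] (hG : G ≤ mΩ)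
    (X₀ : Ω → ℝ) (hX₀meas : Measurable X₀)
    (hX₀sq : Integrable (fun ω => X₀ ω ^ 2) P)
    (mhat : Ω → ℝ) (hmhat : mhat =ᵐ[P] P[X₀ | G])
    (Phat : Ω → ℝ)
    (hPhat : (fun ω => (P[(fun ω' => X₀ ω' ^ 2) | G]) ω - mhat ω ^ 2) =ᵐ[P] Phat)
    (lam σ : ℝ) (Δ : ℝ)
    (W : Ω → ℝ) (hWmeas : Measurable W)
    (hWsq : Integrable (fun ω => W ω ^ 2) P)
    (hWmean : ∫ ω, W ω ∂P = 0)
    (hWvar : ∫ ω, W ω ^ 2 ∂P = σ ^ 2 / (2 * lam) * (1 - Real.exp (-2 * lam * Δ)))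
    (hindep : ProbabilityTheory.Indep (MeasurableSpace.comap W (borel ℝ))
      (G ⊔ MeasurableSpace.comap X₀ (borel ℝ)) P) :
    (P[(fun ω => Real.exp (-lam * Δ) * X₀ ω + W ω) | G]
        =ᵐ[P] fun ω => Real.exp (-lam * Δ) * mhat ω)
    ∧ ((fun ω => (P[(fun ω' => (Real.exp (-lam * Δ) * X₀ ω' + W ω') ^ 2) | G]) ω
          - (Real.exp (-lam * Δ) * mhat ω) ^ 2)
        =ᵐ[P] fun ω => σ ^ 2 / (2 * lam) * (1 - Real.exp (-2 * lam * Δ))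
          + Real.exp (-2 * lam * Δ) * Phat ω) := by
  have hX₀L2 : MemLp X₀ 2 P := (memLp_two_iff_integrable_sq hX₀meas.aestronglyMeasurable).2 hX₀sq
  have hWL2 : MemLp W 2 P := (memLp_two_iff_integrable_sq hWmeas.aestronglyMeasurable).2 hWsq
  have hexp_sq : Real.exp (-lam * Δ) ^ 2 = Real.exp (-2 * lam * Δ) := by
    rw [← Real.exp_nat_mul]; ring_nf
  constructor
  · filter_upwards [condExp_affine_of_indep hG hWmeas (hX₀L2.integrable one_le_two)
      (hWL2.integrable one_le_two) (indep_of_indep_of_le_right hindep le_sup_left)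
      (Real.exp (-lam * Δ)), hmhat] with ω h₁ h₂
    rw [h₁, ← h₂, hWmean, add_zero]
  · filter_upwards [condExp_sq_affine_of_indep hG hX₀meas hWmeas hX₀L2 hWL2 hindep
      (Real.exp (-lam * Δ)), hmhat, hPhat] with ω h₁ h₂ h₃
    rw [h₁, ← h₂, hWmean, hWvar]
    linear_combination Real.exp (-lam * Δ) ^ 2 * h₃ + Phat ω * hexp_sq

/-- Smoothing (prediction) step between observation times for the Ornstein–Uhlenbeck signal:
if `mhat = E[X₀ | G]`, `Phat = E[X₀² | G] − mhat²`, and `X = e^{−λΔ} X₀ + W` with `W` centered,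
of variance `(σ²/(2λ))(1 − e^{−2λΔ})` and independent of `G ⊔ σ(X₀)`, then a.s.
`E[X | G] = e^{−λΔ} mhat` and `E[X² | G] − (e^{−λΔ} mhat)² = (σ²/(2λ))(1 − e^{−2λΔ}) + e^{−2λΔ} Phat`. -/
theorem stmt12 {Ω : Type*} (G : MeasurableSpace Ω) [mΩ : MeasurableSpace Ω]
    (P : Measure Ω) [IsProbabilityMeasure P] (hG : G ≤ mΩ)
    (X₀ : Ω → ℝ) (hX₀meas : Measurable X₀)
    (hX₀sq : Integrable (fun ω => X₀ ω ^ 2) P)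
    (mhat : Ω → ℝ) (hmhat : mhat =ᵐ[P] P[X₀ | G])
    (Phat : Ω → ℝ) (hPhatmeas : Measurable[G] Phat) (hPhatnonneg : ∀ ω, 0 ≤ Phat ω)
    (hPhat : (fun ω => (P[(fun ω' => X₀ ω' ^ 2) | G]) ω - mhat ω ^ 2) =ᵐ[P] Phat)
    (lam σ : ℝ) (hlam : 0 < lam) (hσ : 0 < σ) (Δ : ℝ) (hΔ : 0 ≤ Δ)
    (W : Ω → ℝ) (hWmeas : Measurable W)
    (hWint : Integrable W P) (hWsq : Integrable (fun ω => W ω ^ 2) P)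
    (hWmean : ∫ ω, W ω ∂P = 0)
    (hWvar : ∫ ω, W ω ^ 2 ∂P = σ ^ 2 / (2 * lam) * (1 - Real.exp (-2 * lam * Δ)))
    (hindep : ProbabilityTheory.Indep (MeasurableSpace.comap W (borel ℝ))
      (G ⊔ MeasurableSpace.comap X₀ (borel ℝ)) P) :
    (P[(fun ω => Real.exp (-lam * Δ) * X₀ ω + W ω) | G]
        =ᵐ[P] fun ω => Real.exp (-lam * Δ) * mhat ω)
    ∧ ((fun ω => (P[(fun ω' => (Real.exp (-lam * Δ) * X₀ ω' + W ω') ^ 2) | G]) ω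
          - (Real.exp (-lam * Δ) * mhat ω) ^ 2)
        =ᵐ[P] fun ω => σ ^ 2 / (2 * lam) * (1 - Real.exp (-2 * lam * Δ))
          + Real.exp (-2 * lam * Δ) * Phat ω) :=
  stmt12_general G (mΩ := mΩ) P hG X₀ hX₀meas hX₀sq mhat hmhat Phat hPhat lam σ Δ W hWmeas hWsq
    hWmean hWvar hindep
end
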